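/- arXiv:cs/0602062 — 7 statements merged into one kernel-verified Lean document; each statement's English description precedes it below -/
import Mathlib

section
/- Let Σ be a finite nonempty alphabet, P a stochastic language over Σ, and let A = (ι, (T_x)_{x∈Σ}, τ) be a multiplicity automaton with finite state set Q that is a reduced representation of P. Suppose C_A > 0 and ρ_A ∈ (0,1) are such that for every integer k ≥ 0 and all states q, q' ∈ Q, Σ_{u∈Σ^k} |T_u(q,q')| ≤ C_A·ρ_A^k. Then for every ρ with ρ_A < ρ < 1 there exist C > 0 and α > 0 such that every multiplicity automaton B = (ι_B, (T^B_x)_{x∈Σ}, τ_B) with the same state set Q satisfying |T^B_x(q,q') − T_x(q,q')| < α for all x ∈ Σ and q, q' ∈ Q has Σ_{u∈Σ^k} |T^B_u(q,q')| ≤ C·ρ^k for every k ≥ 0 and all q, q' ∈ Q; consequently the series r_B is absolutely convergent: Σ_{w∈Σ*} |r_B(w)| < ∞. -/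
/-!
Write `F_k(S)` for the matrix `(q, q') ↦ ∑_{|u| = k} |S_u(q, q')|` and `D_x = T^B_x - T_x`.
Splitting `T^B_{xw} = T_x T^B_w + D_x T^B_w` inside the mixed sums
`∑_{|g| = i, |h| = k} |(T_g T^B_h)(q, q')|` moves one letter at a time from `T^B` to `T` and yields
the Duhamel-type inequality `F_{k+1}(T^B) ≤ F_{k+1}(T) + ∑_{j+l=k} F_j(T) (∑_x |D_x|) F_l(T^B)`,
entrywise, with products of nonnegative matrices on the right. Since `F_j(T) ≤ C_A ρ_A^j` and
`∑_{j+l=k} ρ_A^j ρ^l ≤ ρ^{k+1} / (ρ - ρ_A)`, strong induction on `k` gives `F_k(T^B) ≤ 2 C_A ρ^k`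
once `|Σ| |Q|² C_A α ≤ (ρ - ρ_A) / 2`; the geometric decay then makes every entry of `T^B_w`, hence
`r_B`, absolutely summable.
-/

open scoped BigOperators Matrix

/-- A stochastic language over the alphabet `A`: a nonnegative real-valued function on
words whose values are summable with sum `1`. -/
def IsStochastic {A : Type*} (p : List A → ℝ) : Prop :=
  (∀ w, 0 ≤ p w) ∧ HasSum p 1

/-- The matrix associated to a word: the product of the letter matrices. -/
def wordMat {A Q : Type*} [Fintype Q] [DecidableEq Q] (T : A → Matrix Q Q ℝ)
    (w : List A) : Matrix Q Q ℝ :=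
  (w.map T).prod

/-- The series computed by the multiplicity automaton `(ι, T, τ)`. -/
def maSeries {A Q : Type*} [Fintype Q] [DecidableEq Q] (ι τ : Q → ℝ)
    (T : A → Matrix Q Q ℝ) (w : List A) : ℝ :=
  ι ⬝ᵥ (wordMat T w).mulVec τ

/-- The series of state `q` of the multiplicity automaton. -/
def stateSeries {A Q : Type*} [Fintype Q] [DecidableEq Q] (τ : Q → ℝ)
    (T : A → Matrix Q Q ℝ) (q : Q) (w : List A) : ℝ :=
  (wordMat T w).mulVec τ q

/-- `(ι, T, τ)` is a reduced representation of the stochastic language `P`. -/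
def IsReducedRep {A Q : Type*} [Fintype Q] [DecidableEq Q] (ι τ : Q → ℝ)
    (T : A → Matrix Q Q ℝ) (P : List A → ℝ) : Prop :=
  maSeries ι τ T = P ∧ (∀ q, IsStochastic (stateSeries τ T q)) ∧
    LinearIndependent ℝ (stateSeries τ T)

open Finset

section WordMatrices

variable {A Q : Type*} [Fintype Q] [DecidableEq Q]

@[simp]
lemma wordMat_nil (T : A → Matrix Q Q ℝ) : wordMat T [] = 1 := rfl

@[simp]
lemma wordMat_cons (T : A → Matrix Q Q ℝ) (x : A) (w : List A) :
    wordMat T (x :: w) = T x * wordMat T w := by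
  simp [wordMat]

@[simp]
lemma wordMat_append (T : A → Matrix Q Q ℝ) (u v : List A) :
    wordMat T (u ++ v) = wordMat T u * wordMat T v := by
  simp [wordMat]

end WordMatrices

section WordSums

variable {A M : Type*} [Fintype A] [AddCommMonoid M]

lemma sum_ofFn_succ_eq_sum_cons (k : ℕ) (φ : List A → M) :
    ∑ f : Fin (k + 1) → A, φ (List.ofFn f) = ∑ x : A, ∑ f : Fin k → A, φ (x :: List.ofFn f) := by
  rw [← Fintype.sum_prod_type']
  exact (Fintype.sum_equiv (Fin.consEquiv fun _ => A) _ _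
    fun p => by simp [Fin.consEquiv, List.ofFn_succ]).symm

lemma sum_ofFn_succ_eq_sum_concat (k : ℕ) (φ : List A → M) :
    ∑ f : Fin (k + 1) → A, φ (List.ofFn f) = ∑ x : A, ∑ f : Fin k → A, φ (List.ofFn f ++ [x]) := by
  rw [← Fintype.sum_prod_type']
  exact (Fintype.sum_equiv (Fin.snocEquiv fun _ => A) _ _
    fun p => by simp only [Fin.snocEquiv, Equiv.coe_fn_mk]; rw [List.ofFn_succ']; simp).symm

end WordSums

lemma Matrix.abs_mul_apply_le {l m n : Type*} [Fintype m] (M : Matrix l m ℝ) (N : Matrix m n ℝ)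
    (i : l) (j : n) : |(M * N) i j| ≤ ∑ k, |M i k| * |N k j| := by
  rw [Matrix.mul_apply]
  exact (abs_sum_le_sum_abs _ _).trans_eq (by simp only [abs_mul])

lemma Matrix.abs_mul_mul_apply_le {l m n o : Type*} [Fintype m] [Fintype n] (M : Matrix l m ℝ)
    (X Y : Matrix m n ℝ) (N : Matrix n o ℝ) (i : l) (j : o) :
    |(M * Y * N) i j| ≤ |(M * X * N) i j| + ∑ r, ∑ s, |M i r| * |Y r s - X r s| * |N s j| := by
  have hsplit : M * Y * N = M * X * N + M * (Y - X) * N := by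
    rw [Matrix.mul_sub, Matrix.sub_mul, add_sub_cancel]
  rw [hsplit, Matrix.add_apply]
  refine (abs_add_le _ _).trans (add_le_add_right ?_ _)
  calc |(M * (Y - X) * N) i j|
      ≤ ∑ s, |(M * (Y - X)) i s| * |N s j| := Matrix.abs_mul_apply_le _ _ _ _
    _ ≤ ∑ s, ∑ r, |M i r| * |Y r s - X r s| * |N s j| := by
        gcongr with s
        grw [Matrix.abs_mul_apply_le]
        simp only [sum_mul, Matrix.sub_apply, le_refl]
    _ = ∑ r, ∑ s, |M i r| * |Y r s - X r s| * |N s j| := sum_comm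

section Perturbation

variable {A Q : Type*} [Fintype A] [Fintype Q] [DecidableEq Q]

def absLevelSum (T : A → Matrix Q Q ℝ) (k : ℕ) (q q' : Q) : ℝ :=
  ∑ f : Fin k → A, |wordMat T (List.ofFn f) q q'|

def absMixedSum (T S : A → Matrix Q Q ℝ) (i k : ℕ) (q q' : Q) : ℝ :=
  ∑ g : Fin i → A, ∑ h : Fin k → A, |(wordMat T (List.ofFn g) * wordMat S (List.ofFn h)) q q'|

lemma absLevelSum_nonneg (T : A → Matrix Q Q ℝ) (k : ℕ) (q q' : Q) : 0 ≤ absLevelSum T k q q' :=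
  sum_nonneg fun _ _ => abs_nonneg _

lemma absLevelSum_zero (T S : A → Matrix Q Q ℝ) (q q' : Q) :
    absLevelSum S 0 q q' = absLevelSum T 0 q q' := by
  simp [absLevelSum]

lemma absMixedSum_zero_left (T S : A → Matrix Q Q ℝ) (k : ℕ) (q q' : Q) :
    absMixedSum T S 0 k q q' = absLevelSum S k q q' := by
  simp [absMixedSum, absLevelSum]

lemma absMixedSum_zero_right (T S : A → Matrix Q Q ℝ) (i : ℕ) (q q' : Q) :
    absMixedSum T S i 0 q q' = absLevelSum T i q q' := by
  simp [absMixedSum, absLevelSum]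

lemma absMixedSum_succ_right (T S : A → Matrix Q Q ℝ) (i k : ℕ) (q q' : Q) :
    absMixedSum T S i (k + 1) q q' = ∑ g : Fin i → A, ∑ x : A, ∑ h : Fin k → A,
      |(wordMat T (List.ofFn g) * S x * wordMat S (List.ofFn h)) q q'| := by
  unfold absMixedSum
  refine sum_congr rfl fun g _ => ?_
  rw [sum_ofFn_succ_eq_sum_cons k fun w => |(wordMat T (List.ofFn g) * wordMat S w) q q'|]
  simp only [wordMat_cons, Matrix.mul_assoc]

lemma absMixedSum_succ_left (T S : A → Matrix Q Q ℝ) (i k : ℕ) (q q' : Q) :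
    absMixedSum T S (i + 1) k q q' = ∑ g : Fin i → A, ∑ x : A, ∑ h : Fin k → A,
      |(wordMat T (List.ofFn g) * T x * wordMat S (List.ofFn h)) q q'| := by
  unfold absMixedSum
  rw [sum_ofFn_succ_eq_sum_concat i fun w => ∑ h : Fin k → A,
    |(wordMat T w * wordMat S (List.ofFn h)) q q'|, sum_comm]
  simp

lemma absMixedSum_succ_le (T S : A → Matrix Q Q ℝ) (i k : ℕ) (q q' : Q) :
    absMixedSum T S i (k + 1) q q' ≤ absMixedSum T S (i + 1) k q q' +
      ∑ r, ∑ s, absLevelSum T i q r * (∑ x, |S x r s - T x r s|) * absLevelSum S k s q' := by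
  rw [absMixedSum_succ_right, absMixedSum_succ_left]
  calc _ ≤ ∑ g : Fin i → A, ∑ x : A, ∑ h : Fin k → A,
          (|(wordMat T (List.ofFn g) * T x * wordMat S (List.ofFn h)) q q'| +
            ∑ r, ∑ s, |wordMat T (List.ofFn g) q r| * |S x r s - T x r s| *
              |wordMat S (List.ofFn h) s q'|) := by
        gcongr
        exact Matrix.abs_mul_mul_apply_le _ _ _ _ _ _
    _ = _ := by
        simp only [sum_add_distrib, add_right_inj, absLevelSum, sum_mul, mul_sum,
          ← Fintype.sum_prod_type']
        exact Fintype.sum_equiv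
          ⟨fun p => (p.2.2.2.1, p.2.2.2.2, p.2.2.1, p.2.1, p.1),
            fun p => (p.2.2.2.2, p.2.2.2.1, p.2.2.1, p.1, p.2.1), fun _ => rfl, fun _ => rfl⟩
          _ _ fun _ => rfl

lemma absMixedSum_le (T S : A → Matrix Q Q ℝ) (k i : ℕ) (q q' : Q) :
    absMixedSum T S i (k + 1) q q' ≤ absLevelSum T (i + k + 1) q q' +
      ∑ p ∈ antidiagonal k, ∑ r, ∑ s,
        absLevelSum T (i + p.1) q r * (∑ x, |S x r s - T x r s|) * absLevelSum S p.2 s q' := by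
  induction k generalizing i with
  | zero =>
    simpa [absMixedSum_zero_right] using absMixedSum_succ_le T S i 0 q q'
  | succ k ih =>
    rw [Nat.sum_antidiagonal_succ]
    calc absMixedSum T S i (k + 1 + 1) q q'
        ≤ absMixedSum T S (i + 1) (k + 1) q q' + ∑ r, ∑ s,
            absLevelSum T i q r * (∑ x, |S x r s - T x r s|) * absLevelSum S (k + 1) s q' :=
          absMixedSum_succ_le T S i (k + 1) q q'
      _ ≤ _ := by
          grw [ih (i + 1)]
          simp only [add_zero, ← add_assoc, add_right_comm _ 1]
          linarith

lemma absLevelSum_succ_le (T S : A → Matrix Q Q ℝ) (k : ℕ) (q q' : Q) :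
    absLevelSum S (k + 1) q q' ≤ absLevelSum T (k + 1) q q' +
      ∑ p ∈ antidiagonal k, ∑ r, ∑ s,
        absLevelSum T p.1 q r * (∑ x, |S x r s - T x r s|) * absLevelSum S p.2 s q' := by
  simpa [absMixedSum_zero_left] using absMixedSum_le T S k 0 q q'

end Perturbation

lemma sum_antidiagonal_pow_mul_pow_le {a b : ℝ} (ha : 0 ≤ a) (hab : a < b) (k : ℕ) :
    ∑ p ∈ antidiagonal k, a ^ p.1 * b ^ p.2 ≤ b ^ (k + 1) / (b - a) := by
  have hgeom := geom_sum₂_mul b a (k + 1)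
  rw [le_div_iff₀ (sub_pos.mpr hab), ← Nat.sum_antidiagonal_swap,
    Nat.sum_antidiagonal_eq_sum_range_succ_mk]
  simp only [Prod.swap_prod_mk, add_tsub_cancel_right, mul_comm (a ^ _)] at hgeom ⊢
  rw [hgeom]
  linarith [pow_nonneg ha (k + 1)]

theorem absLevelSum_le_of_perturbation {A Q : Type*} [Fintype A] [Fintype Q] [DecidableEq Q]
    {T S : A → Matrix Q Q ℝ} {c ρ₀ ρ δ : ℝ} (hc : 0 ≤ c) (hρ₀ : 0 ≤ ρ₀) (hρ : ρ₀ < ρ)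
    (hT : ∀ k q q', absLevelSum T k q q' ≤ c * ρ₀ ^ k)
    (hS : ∀ r s, ∑ x, |S x r s - T x r s| ≤ δ)
    (hδ : Fintype.card Q ^ 2 * c * δ ≤ (ρ - ρ₀) / 2) (k : ℕ) (q q' : Q) :
    absLevelSum S k q q' ≤ 2 * c * ρ ^ k := by
  induction k using Nat.strong_induction_on generalizing q q' with
  | _ k ih =>
  have hρpos : 0 < ρ := hρ₀.trans_lt hρ
  cases k with
  | zero => linarith [absLevelSum_zero T S q q', hT 0 q q']
  | succ k =>
    have hterm : ∀ p ∈ antidiagonal k, ∀ r s,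
        absLevelSum T p.1 q r * (∑ x, |S x r s - T x r s|) * absLevelSum S p.2 s q' ≤
          c * ρ₀ ^ p.1 * δ * (2 * c * ρ ^ p.2) := by
      intro p hp r s
      have hdist : 0 ≤ ∑ x, |S x r s - T x r s| := sum_nonneg fun _ _ => abs_nonneg _
      exact mul_le_mul
        (mul_le_mul (hT _ _ _) (hS r s) hdist (by positivity))
        (ih _ (Nat.antidiagonal.snd_lt hp) s q') (absLevelSum_nonneg _ _ _ _)
        (mul_nonneg (by positivity) (hdist.trans (hS r s)))
    calc absLevelSum S (k + 1) q q'
        ≤ absLevelSum T (k + 1) q q' + ∑ p ∈ antidiagonal k, ∑ r : Q, ∑ s : Q,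
            c * ρ₀ ^ p.1 * δ * (2 * c * ρ ^ p.2) := by
          grw [absLevelSum_succ_le T S k q q']
          exact add_le_add_right (sum_le_sum fun p hp => sum_le_sum fun r _ =>
            sum_le_sum fun s _ => hterm p hp r s) _
      _ = absLevelSum T (k + 1) q q' + Fintype.card Q ^ 2 * c * δ * (2 * c) *
            ∑ p ∈ antidiagonal k, ρ₀ ^ p.1 * ρ ^ p.2 := by
          simp only [sum_const, card_univ, nsmul_eq_mul, mul_sum]
          congr 1
          exact sum_congr rfl fun _ _ => by ring
      _ ≤ c * ρ ^ (k + 1) + (ρ - ρ₀) / 2 * (2 * c) * (ρ ^ (k + 1) / (ρ - ρ₀)) := by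
          gcongr
          · exact (hT _ _ _).trans (by gcongr)
          · exact sum_antidiagonal_pow_mul_pow_le hρ₀ hρ k
      _ = 2 * c * ρ ^ (k + 1) := by
          field_simp [(sub_pos.mpr hρ).ne']
          ring

lemma summable_abs_wordMat_apply {A Q : Type*} [Fintype A] [Fintype Q] [DecidableEq Q]
    {T : A → Matrix Q Q ℝ} {c ρ : ℝ} (hρ₀ : 0 ≤ ρ) (hρ : ρ < 1)
    {q q' : Q} (h : ∀ k, absLevelSum T k q q' ≤ c * ρ ^ k) :
    Summable fun w : List A => |wordMat T w q q'| := by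
  rw [← (List.equivSigmaTuple (α := A)).symm.summable_iff]
  refine (summable_sigma_of_nonneg fun _ => abs_nonneg _).2 ⟨fun _ => .of_finite, ?_⟩
  refine ((summable_geometric_of_lt_one hρ₀ hρ).mul_left c).of_nonneg_of_le
    (fun _ => tsum_nonneg fun _ => abs_nonneg _) fun k => ?_
  rw [tsum_fintype]
  exact h k

lemma summable_abs_maSeries {A Q : Type*} [Fintype Q] [DecidableEq Q] {T : A → Matrix Q Q ℝ}
    (ι τ : Q → ℝ)
    (h : ∀ q q', Summable fun w : List A => |wordMat T w q q'|) :
    Summable fun w => |maSeries ι τ T w| := by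
  rw [summable_abs_iff]
  unfold maSeries
  simp only [dotProduct, Matrix.mulVec, mul_sum]
  exact summable_sum fun q _ => summable_sum fun q' _ =>
    ((h q q').of_abs.mul_right (τ q')).mul_left (ι q)

theorem statement0_general {A Q : Type*} [Fintype A] [Fintype Q] [DecidableEq Q]
    (T : A → Matrix Q Q ℝ)
    (CA ρA : ℝ) (hCA : 0 < CA) (hρA : ρA ∈ Set.Ioo (0 : ℝ) 1)
    (hbound : ∀ (k : ℕ) (q q' : Q),
      ∑ f : Fin k → A, |wordMat T (List.ofFn f) q q'| ≤ CA * ρA ^ k) :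
    ∀ ρ : ℝ, ρA < ρ → ρ < 1 →
      ∃ C > (0 : ℝ), ∃ α > (0 : ℝ), ∀ (ιB τB : Q → ℝ) (TB : A → Matrix Q Q ℝ),
        (∀ (x : A) (q q' : Q), |TB x q q' - T x q q'| < α) →
        (∀ (k : ℕ) (q q' : Q),
          ∑ f : Fin k → A, |wordMat TB (List.ofFn f) q q'| ≤ C * ρ ^ k) ∧
        Summable (fun w : List A => |maSeries ιB τB TB w|) := by
  intro ρ hρA_lt hρ_lt
  have hgap : 0 < ρ - ρA := sub_pos.mpr hρA_lt
  set X : ℝ := Fintype.card A * Fintype.card Q ^ 2 * CA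
  have hX : 0 ≤ X := by positivity
  refine ⟨2 * CA, by positivity, (ρ - ρA) / (2 * (X + 1)), by positivity,
    fun ιB τB TB hTB => ?_⟩
  have hdist : ∀ r s, ∑ x, |TB x r s - T x r s| ≤ Fintype.card A * ((ρ - ρA) / (2 * (X + 1))) :=
    fun r s => (sum_le_sum fun x _ => (hTB x r s).le).trans_eq (by simp)
  have hsmall : Fintype.card Q ^ 2 * CA * (Fintype.card A * ((ρ - ρA) / (2 * (X + 1)))) ≤
      (ρ - ρA) / 2 := by
    rw [show Fintype.card Q ^ 2 * CA * (Fintype.card A * ((ρ - ρA) / (2 * (X + 1)))) =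
      (ρ - ρA) / 2 * (X / (X + 1)) by field_simp; ring]
    exact mul_le_of_le_one_right (by positivity) ((div_le_one (by positivity)).mpr (by linarith))
  have hlevel := absLevelSum_le_of_perturbation hCA.le hρA.1.le hρA_lt hbound hdist hsmall
  exact ⟨hlevel, summable_abs_maSeries ιB τB fun q q' =>
    summable_abs_wordMat_apply (hρA.1.trans hρA_lt).le hρ_lt (hlevel · q q')⟩

theorem statement0 {A Q : Type*} [Fintype A] [Nonempty A] [Fintype Q] [DecidableEq Q]
    (P : List A → ℝ) (hP : IsStochastic P)
    (ι τ : Q → ℝ) (T : A → Matrix Q Q ℝ) (hred : IsReducedRep ι τ T P)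
    (CA ρA : ℝ) (hCA : 0 < CA) (hρA : ρA ∈ Set.Ioo (0 : ℝ) 1)
    (hbound : ∀ (k : ℕ) (q q' : Q),
      ∑ f : Fin k → A, |wordMat T (List.ofFn f) q q'| ≤ CA * ρA ^ k) :
    ∀ ρ : ℝ, ρA < ρ → ρ < 1 →
      ∃ C > (0 : ℝ), ∃ α > (0 : ℝ), ∀ (ιB τB : Q → ℝ) (TB : A → Matrix Q Q ℝ),
        (∀ (x : A) (q q' : Q), |TB x q q' - T x q q'| < α) →
        (∀ (k : ℕ) (q q' : Q),
          ∑ f : Fin k → A, |wordMat TB (List.ofFn f) q q'| ≤ C * ρ ^ k) ∧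
        Summable (fun w : List A => |maSeries ιB τB TB w|) :=
  statement0_general T CA ρA hCA hρA hbound
end

section
/- Let Σ be a finite nonempty alphabet and let p_1, …, p_n (n ≥ 1) be stochastic languages over Σ that are linearly independent in the real vector space of functions Σ* → ℝ. Then the set Λ = {(α_1,…,α_n) ∈ ℝⁿ : Σ_{i=1}^n α_i·p_i is a stochastic language} is a convex and compact subset of ℝⁿ. -/
open scoped BigOperators

section Aux

variable {A : Type*} {n : ℕ}

/-- evaluation functional -/
noncomputable def phiEval (p : Fin n → List A → ℝ) (w : List A) : (Fin n → ℝ) →ₗ[ℝ] ℝ where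
  toFun α := ∑ i, α i * p i w
  map_add' a b := by simp [add_mul, Finset.sum_add_distrib]
  map_smul' c a := by simp [Finset.mul_sum, mul_assoc]

lemma stoch_mem_iff (p : Fin n → List A → ℝ) (hp : ∀ i, IsStochastic (p i)) (α : Fin n → ℝ) :
    IsStochastic (fun w => ∑ i, α i * p i w) ↔
      (∀ w, 0 ≤ ∑ i, α i * p i w) ∧ ∑ i, α i = 1 := by
  have hsum : HasSum (fun w => ∑ i, α i * p i w) (∑ i, α i) := by
    have := hasSum_sum (s := (Finset.univ : Finset (Fin n)))
      (f := fun i w => α i * p i w) (a := fun i => α i * 1)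
      (fun i _ => (hp i).2.mul_left (α i))
    simpa using this
  constructor
  · intro h
    exact ⟨h.1, (h.2.unique hsum).symm⟩
  · intro h
    exact ⟨h.1, h.2 ▸ hsum⟩

lemma exists_finset_inj (p : Fin n → List A → ℝ) (hind : LinearIndependent ℝ p) :
    ∃ F : Finset (List A), ∀ α : Fin n → ℝ, (∀ w ∈ F, ∑ i, α i * p i w = 0) → α = 0 := by
  classical
  set S : Set (Submodule ℝ (Fin n → ℝ)) :=
    {K | ∃ F : Finset (List A), K = ⨅ w ∈ F, LinearMap.ker (phiEval p w)} with hS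
  have hne : S.Nonempty := ⟨⊤, ∅, by simp⟩
  obtain ⟨K, ⟨F, rfl⟩, hmin⟩ := IsArtinian.set_has_minimal S hne
  refine ⟨F, fun α hα => ?_⟩
  -- K ≤ ker (phiEval p w) for every w
  have hker : ∀ w : List A, (⨅ w ∈ F, LinearMap.ker (phiEval p w)) ≤ LinearMap.ker (phiEval p w) := by
    intro w
    have hmem : ((⨅ w ∈ F, LinearMap.ker (phiEval p w)) ⊓ LinearMap.ker (phiEval p w)) ∈ S :=
      ⟨insert w F, by rw [Finset.iInf_insert, inf_comm]⟩
    have hle : ((⨅ w ∈ F, LinearMap.ker (phiEval p w)) ⊓ LinearMap.ker (phiEval p w)) ≤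
        ⨅ w ∈ F, LinearMap.ker (phiEval p w) := inf_le_left
    have := hmin _ hmem
    have heq : ((⨅ w ∈ F, LinearMap.ker (phiEval p w)) ⊓ LinearMap.ker (phiEval p w)) =
        ⨅ w ∈ F, LinearMap.ker (phiEval p w) := by
      by_contra hne'
      exact this (lt_of_le_of_ne hle hne')
    rw [← heq]; exact inf_le_right
  have hαK : α ∈ ⨅ w ∈ F, LinearMap.ker (phiEval p w) := by
    simp only [Submodule.mem_iInf, LinearMap.mem_ker]
    intro w hw
    exact hα w hw
  have hall : ∀ w, ∑ i, α i * p i w = 0 := fun w => hker w hαK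
  -- linear independence forces α = 0
  have := linearIndependent_iff'.mp hind Finset.univ α (by
    funext w
    simpa [Finset.sum_apply] using hall w)
  funext i
  exact this i (Finset.mem_univ i)

end Aux

theorem statement3 {A : Type*} [Fintype A] [Nonempty A] {n : ℕ} (hn : 1 ≤ n)
    (p : Fin n → List A → ℝ) (hp : ∀ i, IsStochastic (p i))
    (hind : LinearIndependent ℝ p) :
    Convex ℝ {α : Fin n → ℝ | IsStochastic fun w => ∑ i, α i * p i w} ∧
    IsCompact {α : Fin n → ℝ | IsStochastic fun w => ∑ i, α i * p i w} := by
  classical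
  set Λ : Set (Fin n → ℝ) := {α : Fin n → ℝ | IsStochastic fun w => ∑ i, α i * p i w} with hΛ
  have hmem : ∀ α, α ∈ Λ ↔ (∀ w, 0 ≤ ∑ i, α i * p i w) ∧ ∑ i, α i = 1 := by
    intro α; exact stoch_mem_iff p hp α
  -- convexity
  have hconv : Convex ℝ Λ := by
    intro α hα β hβ a b ha hb hab
    rw [hmem] at hα hβ ⊢
    constructor
    · intro w
      have : ∑ i, (a • α + b • β) i * p i w
          = a * ∑ i, α i * p i w + b * ∑ i, β i * p i w := by
        simp [add_mul, Finset.sum_add_distrib, Finset.mul_sum, mul_assoc]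
      rw [this]
      exact add_nonneg (mul_nonneg ha (hα.1 w)) (mul_nonneg hb (hβ.1 w))
    · have : ∑ i, (a • α + b • β) i = a * ∑ i, α i + b * ∑ i, β i := by
        simp [Finset.sum_add_distrib, Finset.mul_sum]
      rw [this, hα.2, hβ.2, mul_one, mul_one, hab]
  -- closedness
  have hclosed : IsClosed Λ := by
    have : Λ = {α : Fin n → ℝ | ∑ i, α i = 1} ∩ ⋂ w, {α : Fin n → ℝ | 0 ≤ ∑ i, α i * p i w} := by
      ext α
      simp only [hmem, Set.mem_inter_iff, Set.mem_setOf_eq, Set.mem_iInter]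
      tauto
    rw [this]
    refine (isClosed_eq (by fun_prop) continuous_const).inter
      (isClosed_iInter fun w => isClosed_le continuous_const (by fun_prop))
  -- boundedness via a finite set of evaluation points
  obtain ⟨F, hF⟩ := exists_finset_inj p hind
  set L : (Fin n → ℝ) →ₗ[ℝ] (F → ℝ) := LinearMap.pi (fun w : F => phiEval p (w : List A)) with hL
  have hLker : LinearMap.ker L = ⊥ := by
    rw [LinearMap.ker_eq_bot']
    intro α hα
    apply hF
    intro w hw
    have := congrFun hα ⟨w, hw⟩
    simpa [L, phiEval] using this
  obtain ⟨g, hg⟩ := L.exists_leftInverse_of_injective hLker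
  have hsub : Λ ⊆ g '' (Set.Icc (0 : F → ℝ) 1) := by
    intro α hα
    refine ⟨L α, ?_, by rw [← LinearMap.comp_apply, hg]; rfl⟩
    have hα' := (hmem α).mp hα
    have hst : IsStochastic fun w => ∑ i, α i * p i w := hα
    constructor
    · intro w
      simpa [L, phiEval] using hα'.1 (w : List A)
    · intro w
      have : ∑ i, α i * p i (w : List A) ≤ 1 :=
        le_hasSum hst.2 (w : List A) (fun w' _ => hst.1 w')
      simpa [L, phiEval] using this
  have hcomp : IsCompact (g '' (Set.Icc (0 : F → ℝ) 1)) :=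
    isCompact_Icc.image g.continuous_of_finiteDimensional
  exact ⟨hconv, hcomp.of_isClosed_subset hclosed hsub⟩
end

section
/- Let Σ be a finite nonempty alphabet and let P be a stochastic language over Σ that admits a reduced representation by a multiplicity automaton. Then there exist a constant C > 0 and ρ ∈ [0,1) such that for every integer k ≥ 0, P(Σ^{≥k}) ≤ C·ρ^k, where Σ^{≥k} = {w ∈ Σ* : |w| ≥ k}. -/
open scoped BigOperators Matrix

/-!
The vector `v k` of tail masses `∑_{|w| ≥ k} r_q(w)` of the state series satisfies the linear
recurrence `v (k + 1) = M v k` with `M = ∑ₓ Tₓ`, it tends to `0` because every `r_q` is summable,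
and `P(Σ^{≥k}) = ι ⬝ᵥ v k`. An orbit of a linear map in finite dimension that tends to `0` decays
geometrically: restricted to the invariant span of the orbit, the powers of the map tend to `0`
pointwise, hence some power has operator norm at most `1 / 2`.
-/

open Filter Topology

theorem exists_le_geometric_of_le_half_shift {u : ℕ → ℝ} {K : ℕ} (hK : 0 < K)
    (hu : ∀ k, u (k + K) ≤ u k / 2) :
    ∃ C > (0 : ℝ), ∃ ρ ∈ Set.Ico (0 : ℝ) 1, ∀ k, u k ≤ C * ρ ^ k := by
  -- chosen so that Bernoulli's inequality gives `1 / 2 ≤ ρ ^ K`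
  set ρ : ℝ := 1 - 1 / (2 * K)
  have hKR : (1 : ℝ) ≤ K := by exact_mod_cast hK
  have hρ : ρ ∈ Set.Ico (0 : ℝ) 1 :=
    ⟨by rw [sub_nonneg, div_le_one (by positivity)]; linarith, sub_lt_self 1 (by positivity)⟩
  have hρK : 1 / 2 ≤ ρ ^ K := by
    have := one_add_mul_le_pow (a := -(1 / (2 * (K : ℝ)))) (by
      rw [neg_le_neg_iff, div_le_iff₀ (by positivity)]; linarith) K
    have hK' : (K : ℝ) * -(1 / (2 * K)) = -(1 / 2) := by field_simp
    rw [hK', ← sub_eq_add_neg, ← sub_eq_add_neg] at this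
    linarith
  have hiter : ∀ q r, u (q * K + r) ≤ (1 / 2) ^ q * u r := by
    intro q r
    induction q with
    | zero => simp
    | succ q ih =>
      calc u ((q + 1) * K + r) = u ((q * K + r) + K) := by ring_nf
        _ ≤ u (q * K + r) / 2 := hu _
        _ ≤ (1 / 2) ^ q * u r / 2 := by linarith
        _ = (1 / 2) ^ (q + 1) * u r := by ring
  set S := ∑ r ∈ Finset.range K, |u r|
  have hS : 0 ≤ S := Finset.sum_nonneg fun r _ => abs_nonneg _
  refine ⟨2 * S + 1, by positivity, ρ, hρ, fun k => ?_⟩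
  obtain ⟨q, r, hr, rfl⟩ : ∃ q r, r < K ∧ k = q * K + r :=
    ⟨k / K, k % K, Nat.mod_lt k hK, (Nat.div_add_mod' k K).symm⟩
  have hur : u r ≤ S :=
    (le_abs_self _).trans (Finset.single_le_sum (fun i _ => abs_nonneg (u i))
      (Finset.mem_range.2 hr))
  have hρr : 1 / 2 ≤ ρ ^ r :=
    hρK.trans (pow_le_pow_of_le_one hρ.1 hρ.2.le hr.le)
  have hhalf : (1 / 2 : ℝ) ^ q ≤ 2 * ρ ^ (q * K + r) := by
    calc (1 / 2 : ℝ) ^ q ≤ (ρ ^ K) ^ q := pow_le_pow_left₀ (by norm_num) hρK q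
      _ = 2 * (ρ ^ (q * K) * (1 / 2)) := by rw [← pow_mul, mul_comm K]; ring
      _ ≤ 2 * ρ ^ (q * K + r) := by
        rw [pow_add]; gcongr; exact pow_nonneg hρ.1 _
  have hρk : 0 ≤ ρ ^ (q * K + r) := pow_nonneg hρ.1 _
  calc u (q * K + r) ≤ (1 / 2) ^ q * S := (hiter q r).trans (by gcongr)
    _ ≤ 2 * ρ ^ (q * K + r) * S := by gcongr
    _ ≤ (2 * S + 1) * ρ ^ (q * K + r) := by nlinarith

section FiniteDimensional

variable {𝕜 E : Type*} [NontriviallyNormedField 𝕜] [CompleteSpace 𝕜]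
  [NormedAddCommGroup E] [NormedSpace 𝕜 E] [FiniteDimensional 𝕜 E]

theorem ContinuousLinearMap.exists_opNorm_pow_le_half (L : E →L[𝕜] E)
    (hL : ∀ x, Tendsto (fun k => (L ^ k) x) atTop (𝓝 0)) :
    ∃ K > 0, ‖L ^ K‖ ≤ 1 / 2 := by
  let b := Module.finBasis 𝕜 E
  obtain ⟨C, hC, hb⟩ := b.exists_opNorm_le (F := E)
  have hsmall : ∀ i, ∀ᶠ k in atTop, ‖(L ^ k) (b i)‖ ≤ 1 / (2 * C) := fun i =>
    (tendsto_zero_iff_norm_tendsto_zero.1 (hL (b i))).eventually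
      (eventually_le_nhds (by positivity))
  obtain ⟨K, hK, hKsmall⟩ := ((eventually_gt_atTop 0).and (eventually_all.2 hsmall)).exists
  refine ⟨K, hK, ?_⟩
  calc ‖L ^ K‖ ≤ C * (1 / (2 * C)) := hb (by positivity) hKsmall
    _ = 1 / 2 := by field_simp

theorem ContinuousLinearMap.exists_opNorm_pow_le_geometric (L : E →L[𝕜] E)
    (hL : ∀ x, Tendsto (fun k => (L ^ k) x) atTop (𝓝 0)) :
    ∃ C > (0 : ℝ), ∃ ρ ∈ Set.Ico (0 : ℝ) 1, ∀ k, ‖L ^ k‖ ≤ C * ρ ^ k := by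
  obtain ⟨K, hK, hLK⟩ := L.exists_opNorm_pow_le_half hL
  refine exists_le_geometric_of_le_half_shift hK fun k => ?_
  calc ‖L ^ (k + K)‖ = ‖L ^ K * L ^ k‖ := by rw [pow_add, (Commute.pow_pow_self L k K).eq]
    _ ≤ ‖L ^ K‖ * ‖L ^ k‖ := norm_mul_le _ _
    _ ≤ 1 / 2 * ‖L ^ k‖ := by gcongr
    _ = ‖L ^ k‖ / 2 := by ring

/-- On the `L`-invariant span of the orbit, the powers of `L` tend to `0` pointwise, hence
decay geometrically in operator norm. -/
theorem Module.End.exists_norm_pow_apply_le_geometric (L : Module.End 𝕜 E) (x : E)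
    (hx : Tendsto (fun k => (L ^ k) x) atTop (𝓝 0)) :
    ∃ C > (0 : ℝ), ∃ ρ ∈ Set.Ico (0 : ℝ) 1, ∀ k, ‖(L ^ k) x‖ ≤ C * ρ ^ k := by
  set V := Submodule.span 𝕜 (Set.range fun k => (L ^ k) x)
  have horbit : ∀ j, (L ^ j) x ∈ V := fun j => Submodule.subset_span ⟨j, rfl⟩
  have hV : V ≤ V.comap L := Submodule.span_le.2 <| Set.range_subset_iff.2 fun j => by
    simpa [← Module.End.mul_apply, ← pow_succ'] using horbit (j + 1)
  have htends : ∀ y ∈ V, Tendsto (fun k => (L ^ k) y) atTop (𝓝 0) := by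
    intro y hy
    induction hy using Submodule.span_induction with
    | mem y hy =>
      obtain ⟨j, rfl⟩ := hy
      refine (hx.comp (tendsto_add_atTop_nat j)).congr fun k => ?_
      simp only [Function.comp_apply, ← Module.End.mul_apply, ← pow_add]
    | zero => simp
    | add y z _ _ hy hz => simpa using hy.add hz
    | smul c y _ hy => simpa using hy.const_smul c
  let L' := Module.End.toContinuousLinearMap V (L.restrict hV)
  have hL' : ∀ k (y : V), ((L' ^ k) y : E) = (L ^ k) y := fun k y => by
    rw [← map_pow]
    show ((L.restrict (p := V) (q := V) hV ^ k) y : E) = _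
    rw [Module.End.pow_restrict, LinearMap.restrict_apply]
  obtain ⟨C, hC, ρ, hρ, hbound⟩ := L'.exists_opNorm_pow_le_geometric fun y => by
    rw [Topology.IsEmbedding.subtypeVal.tendsto_nhds_iff]
    exact (htends y y.2).congr fun k => (hL' k y).symm
  refine ⟨C * (‖x‖ + 1), by positivity, ρ, hρ, fun k => ?_⟩
  have hx0 : x ∈ V := by simpa using horbit 0
  calc ‖(L ^ k) x‖ = ‖(L' ^ k) ⟨x, hx0⟩‖ := (congrArg norm (hL' k ⟨x, hx0⟩)).symm
    _ ≤ ‖L' ^ k‖ * ‖x‖ := (L' ^ k).le_opNorm _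
    _ ≤ C * ρ ^ k * (‖x‖ + 1) :=
        mul_le_mul (hbound k) (by linarith) (norm_nonneg _)
          (mul_nonneg hC.le (pow_nonneg hρ.1 k))
    _ = C * (‖x‖ + 1) * ρ ^ k := by ring

end FiniteDimensional

section TailMass

variable {A : Type*}

noncomputable def tailMass (f : List A → ℝ) (k : ℕ) : ℝ :=
  ∑' w : {w : List A // k ≤ w.length}, f w

theorem tendsto_tailMass_atTop_zero [Finite A] (f : List A → ℝ) :
    Tendsto (tailMass f) atTop (𝓝 0) := by
  have hshort : Tendsto (fun k => (List.finite_length_lt A k).toFinset) atTop atTop :=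
    tendsto_atTop_atTop.2 fun s => ⟨(s.sup List.length) + 1, fun k hk w hw => by
      simpa using (Finset.le_sup (f := List.length) hw).trans_lt hk⟩
  refine ((tendsto_tsum_compl_atTop_zero f).comp hshort).congr fun k => ?_
  exact tsum_congr_subtype f fun w => by simp

def consEquivLengthGe (k : ℕ) :
    (A × {w : List A // k ≤ w.length}) ≃ {w : List A // k + 1 ≤ w.length} where
  toFun p := ⟨p.1 :: p.2.1, by simpa using p.2.2⟩
  invFun
    | ⟨[], h⟩ => absurd h (by simp)
    | ⟨x :: w, h⟩ => (x, ⟨w, by simpa using h⟩)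
  left_inv _ := rfl
  right_inv
    | ⟨[], h⟩ => absurd h (by simp)
    | ⟨_ :: _, _⟩ => rfl

theorem tailMass_succ [Fintype A] {f : List A → ℝ} (hf : Summable f) (k : ℕ) :
    tailMass f (k + 1) = ∑ x : A, tailMass (fun w => f (x :: w)) k := by
  have hprod : Summable fun p : A × {w : List A // k ≤ w.length} => f (p.1 :: p.2) :=
    (consEquivLengthGe k).summable_iff.2 (hf.subtype _)
  rw [tailMass, ← (consEquivLengthGe k).tsum_eq]
  exact hprod.tsum_prod.trans (tsum_fintype _)

theorem tailMass_dotProduct {Q : Type*} [Fintype Q] {F : Q → List A → ℝ}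
    (hF : ∀ q, Summable (F q)) (c : Q → ℝ) (k : ℕ) :
    tailMass (fun w => c ⬝ᵥ fun q => F q w) k = c ⬝ᵥ fun q => tailMass (F q) k := by
  simp only [tailMass, dotProduct]
  rw [Summable.tsum_finsetSum (f := fun q (w : {w : List A // k ≤ w.length}) => c q * F q w)
    fun q _ => ((hF q).subtype _).mul_left (c q)]
  simp only [tsum_mul_left]

end TailMass

section Automaton

variable {A Q : Type*} [Fintype Q] [DecidableEq Q] (τ : Q → ℝ) (T : A → Matrix Q Q ℝ)

theorem stateSeries_cons (x : A) (w : List A) :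
    (fun q => stateSeries τ T q (x :: w)) = T x *ᵥ fun q => stateSeries τ T q w := by
  unfold stateSeries wordMat
  rw [List.map_cons, List.prod_cons, ← Matrix.mulVec_mulVec]

noncomputable def stateTail (k : ℕ) : Q → ℝ := fun q => tailMass (stateSeries τ T q) k

theorem stateTail_succ [Fintype A] (hsum : ∀ q, Summable (stateSeries τ T q)) (k : ℕ) :
    stateTail τ T (k + 1) = (∑ x, T x) *ᵥ stateTail τ T k := by
  ext q
  rw [stateTail, tailMass_succ (hsum q), Matrix.sum_mulVec, Finset.sum_apply]
  refine Finset.sum_congr rfl fun x _ => ?_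
  have hcons : (fun w => stateSeries τ T q (x :: w)) =
      fun w => T x q ⬝ᵥ fun q' => stateSeries τ T q' w :=
    funext fun w => congrFun (stateSeries_cons τ T x w) q
  rw [hcons, tailMass_dotProduct hsum]
  rfl

end Automaton

theorem dotProduct_le_sum_abs_mul_norm {Q : Type*} [Fintype Q] (c v : Q → ℝ) :
    c ⬝ᵥ v ≤ (∑ q, |c q|) * ‖v‖ := by
  rw [dotProduct, Finset.sum_mul]
  refine Finset.sum_le_sum fun q _ => ?_
  calc c q * v q ≤ |c q| * |v q| := by rw [← abs_mul]; exact le_abs_self _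
    _ ≤ |c q| * ‖v‖ := by gcongr; exact norm_le_pi_norm v q

theorem statement8_general {A : Type*} [Fintype A]
    (P : List A → ℝ)
    (hrep : ∃ (n : ℕ) (ι τ : Fin n → ℝ) (T : A → Matrix (Fin n) (Fin n) ℝ),
      IsReducedRep ι τ T P) :
    ∃ C > (0 : ℝ), ∃ ρ ∈ Set.Ico (0 : ℝ) 1,
      ∀ k : ℕ, (∑' w : {w : List A // k ≤ w.length}, P w) ≤ C * ρ ^ k := by
  obtain ⟨n, ι, τ, T, rfl, hstoch, -⟩ := hrep
  have hsum : ∀ q, Summable (stateSeries τ T q) := fun q => (hstoch q).2.summable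
  set L := (∑ x, T x).mulVecLin
  have horbit : ∀ k, stateTail τ T k = (L ^ k) (stateTail τ T 0) := by
    intro k
    induction k with
    | zero => rfl
    | succ k ih => rw [stateTail_succ τ T hsum, ih, pow_succ', Module.End.mul_apply]; rfl
  have hlim : Tendsto (fun k => (L ^ k) (stateTail τ T 0)) atTop (𝓝 0) := by
    simp only [← horbit]
    exact tendsto_pi_nhds.2 fun q => tendsto_tailMass_atTop_zero _
  obtain ⟨C, hC, ρ, hρ, hbound⟩ := Module.End.exists_norm_pow_apply_le_geometric L _ hlim
  refine ⟨(∑ q, |ι q| + 1) * C, by positivity, ρ, hρ, fun k => ?_⟩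
  calc (∑' w : {w : List A // k ≤ w.length}, maSeries ι τ T w)
      = ι ⬝ᵥ stateTail τ T k := tailMass_dotProduct hsum ι k
    _ ≤ (∑ q, |ι q|) * ‖stateTail τ T k‖ := dotProduct_le_sum_abs_mul_norm _ _
    _ ≤ (∑ q, |ι q| + 1) * (C * ρ ^ k) := by
        rw [horbit]
        gcongr
        · linarith
        · exact hbound k
    _ = (∑ q, |ι q| + 1) * C * ρ ^ k := by ring

theorem statement8 {A : Type*} [Fintype A] [Nonempty A]
    (P : List A → ℝ) (hP : IsStochastic P)
    (hrep : ∃ (n : ℕ) (ι τ : Fin n → ℝ) (T : A → Matrix (Fin n) (Fin n) ℝ),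
      IsReducedRep ι τ T P) :
    ∃ C > (0 : ℝ), ∃ ρ ∈ Set.Ico (0 : ℝ) 1,
      ∀ k : ℕ, (∑' w : {w : List A // k ≤ w.length}, P w) ≤ C * ρ ^ k :=
  statement8_general P hrep
end

section
/- There exists a stochastic language p over the one-letter alphabet Σ = {a} such that p is computed by some multiplicity automaton with real weights, but p is not computed by any probabilistic automaton. -/
open scoped BigOperators Matrix

/-- `(ι, T, τ)` is a probabilistic automaton: all weights are nonnegative, the initial
weights sum to `1`, and at every state the terminal weight plus all outgoing transition
weights sum to `1`. -/
def IsPA {A Q : Type*} [Fintype A] [Fintype Q] [DecidableEq Q] (ι τ : Q → ℝ)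
    (T : A → Matrix Q Q ℝ) : Prop :=
  (∀ q, 0 ≤ ι q) ∧ (∀ q, 0 ≤ τ q) ∧ (∀ x q q', 0 ≤ T x q q') ∧
    (∑ q : Q, ι q = 1) ∧ ∀ q, τ q + ∑ x : A, ∑ q' : Q, T x q q' = 1

/-!
Take `p(aⁿ) = c · 2⁻ⁿ · (1 + cos n)`, computed by a three-state automaton that scales by `1/2` and
rotates by one radian. If a probabilistic automaton `(ι, M, τ)` computed `p`, the nonnegative
vectors `uᵣ = 2ʳ ι Mʳ / c` and `yₛ = 2ˢ Mˢ τ` would satisfy `uᵣ ⬝ yₛ = 1 + cos (r + s)`.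
Once the coordinates on which one side vanishes identically are discarded, these vectors are
bounded; as the naturals are dense modulo `2π`, compactness then yields nonnegative vectors
`U θ`, `Y φ` indexed by angles with `U θ ⬝ Y φ = 1 + cos (θ + φ)`. Infinitely many angles share
finitely many supports, so some `θ ≠ θ'` have `U θ`, `U θ'` with the same support; then
`U θ ⬝ Y (π - θ')` vanishes together with `U θ' ⬝ Y (π - θ') = 1 + cos π = 0`, although
`1 + cos (θ - θ' + π) ≠ 0`.
-/

open Real Filter Topology

namespace Real.Angle

local instance : Fact (0 < 2 * π) := ⟨two_pi_pos⟩

instance : CompactSpace Angle := inferInstanceAs (CompactSpace (AddCircle (2 * π)))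

instance : Infinite Angle :=
  have : Infinite (Set.Ico 0 (0 + 2 * π)) := (Set.Ico_infinite (by positivity)).to_subtype
  Infinite.of_injective _ (AddCircle.equivIco (2 * π) 0).symm.injective

theorem denseRange_natCast : DenseRange fun n : ℕ => ((n : ℝ) : Angle) := by
  have hirr : Irrational (1 / (2 * π)) := by
    simpa [mul_comm] using (irrational_pi.mul_natCast two_ne_zero).inv
  have h : DenseRange fun n : ℕ => n • ((1 : ℝ) : Angle) :=
    denseRange_zsmul_iff_nsmul.1 (AddCircle.denseRange_zsmul_coe_iff (p := 2 * π).2 hirr)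
  simpa only [← coe_nsmul, nsmul_eq_mul, mul_one] using h

theorem exists_tendsto_natCast (θ : Angle) :
    ∃ r : ℕ → ℕ, Tendsto (fun t => ((r t : ℝ) : Angle)) atTop (𝓝 θ) := by
  obtain ⟨x, hx, hlim⟩ := mem_closure_iff_seq_limit.1 (denseRange_natCast θ)
  choose r hr using hx
  exact ⟨r, by simpa only [hr] using hlim⟩

theorem one_add_cos_eq_zero_iff {θ : Angle} : 1 + cos θ = 0 ↔ θ = π := by
  rw [add_eq_zero_iff_neg_eq, ← cos_coe_pi, eq_comm, cos_eq_iff_eq_or_eq_neg, neg_coe_pi, or_self]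

end Real.Angle

section NonnegFactorization

variable {Q : Type*} [Fintype Q]

theorem exists_isBounded_dotProduct_eq {α β : Type*} {u : α → Q → ℝ} {y : β → Q → ℝ}
    (hu : ∀ a, 0 ≤ u a) (hy : ∀ b, 0 ≤ y b) {C : ℝ} (hC : ∀ a b, u a ⬝ᵥ y b ≤ C) :
    ∃ v : α → Q → ℝ, (∀ a, 0 ≤ v a) ∧ Bornology.IsBounded (Set.range v) ∧
      ∀ a b, v a ⬝ᵥ y b = u a ⬝ᵥ y b := by
  classical
  -- Coordinates on which every `y b` vanishes are invisible; on the others `u a q ≤ C / y b q`.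
  let seen : Q → Prop := fun q => ∃ b, 0 < y b q
  refine ⟨fun a q => if seen q then u a q else 0, fun a q => ?_, ?_, fun a b => ?_⟩
  · dsimp only
    split_ifs
    exacts [hu a q, le_rfl]
  · let B : Q → ℝ := fun q => if h : seen q then C / y h.choose q else 0
    refine (Metric.isBounded_Icc 0 B).subset <|
      Set.range_subset_iff.2 fun a => ⟨?_, fun q => ?_⟩
    · intro q
      dsimp only
      split_ifs
      exacts [hu a q, le_rfl]
    · dsimp only [B]
      split_ifs with h
      · rw [le_div_iff₀ h.choose_spec]
        calc u a q * y h.choose q ≤ u a ⬝ᵥ y h.choose :=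
              Finset.single_le_sum (f := fun p => u a p * y h.choose p)
                (fun p _ => mul_nonneg (hu a p) (hy _ p)) (Finset.mem_univ q)
          _ ≤ C := hC a _
      · rfl
  · refine Finset.sum_congr rfl fun q _ => ?_
    show (if seen q then u a q else 0) * y b q = u a q * y b q
    split_ifs with h
    · rfl
    · have : y b q = 0 := le_antisymm (not_lt.1 (not_exists.1 h b)) (hy b q)
      simp [this]

theorem exists_nonneg_dotProduct_eq_of_isBounded {β : Type*} {v : ℕ → Q → ℝ}
    (hv : ∀ r, 0 ≤ v r) (hb : Bornology.IsBounded (Set.range v)) {y : β → Q → ℝ}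
    {F : Angle → β → ℝ} (hF : ∀ b, Continuous (F · b))
    (h : ∀ r b, v r ⬝ᵥ y b = F (r : ℝ) b) (θ : Angle) :
    ∃ V, 0 ≤ V ∧ ∀ b, V ⬝ᵥ y b = F θ b := by
  obtain ⟨r, hr⟩ := Angle.exists_tendsto_natCast θ
  obtain ⟨V, -, φ, hφ, hV⟩ := tendsto_subseq_of_bounded hb fun t => Set.mem_range_self (r t)
  refine ⟨V, ge_of_tendsto' hV fun t => hv _, fun b =>
    tendsto_nhds_unique (f := fun t => v (r (φ t)) ⬝ᵥ y b) (l := atTop) ?_ ?_⟩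
  · exact ((continuous_id.dotProduct continuous_const).tendsto V).comp hV
  · simpa only [Function.comp_def, h] using ((hF b).tendsto θ).comp (hr.comp hφ.tendsto_atTop)

theorem exists_nonneg_dotProduct_eq_angle_add {g : Angle → ℝ} (hg : Continuous g)
    {u y : ℕ → Q → ℝ} (hu : ∀ r, 0 ≤ u r) (hy : ∀ s, 0 ≤ y s)
    (h : ∀ r s : ℕ, u r ⬝ᵥ y s = g ((r + s : ℝ) : Angle)) :
    ∃ U Y : Angle → Q → ℝ, (∀ θ, 0 ≤ U θ) ∧ (∀ φ, 0 ≤ Y φ) ∧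
      ∀ θ φ, U θ ⬝ᵥ Y φ = g (θ + φ) := by
  obtain ⟨C, hC⟩ := (isCompact_range hg).bddAbove
  have hgC : ∀ θ, g θ ≤ C := fun θ => hC (Set.mem_range_self θ)
  obtain ⟨v, hv, hvb, hvu⟩ :=
    exists_isBounded_dotProduct_eq hu hy fun r s => (h r s).trans_le (hgC _)
  choose U hU hUy using exists_nonneg_dotProduct_eq_of_isBounded hv hvb
    (F := fun θ (s : ℕ) => g (θ + ((s : ℝ) : Angle)))
    (fun s => hg.comp (continuous_add_const _))
    (fun r s => by rw [hvu, h, Angle.coe_add])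
  obtain ⟨w, hw, hwb, hwy⟩ := exists_isBounded_dotProduct_eq hy hU fun s θ => by
    rw [dotProduct_comm, hUy]
    exact hgC _
  choose Y hY hYU using exists_nonneg_dotProduct_eq_of_isBounded hw hwb
    (F := fun φ θ => g (θ + φ)) (fun θ => hg.comp (continuous_const_add θ))
    (fun s θ => by rw [hwy, dotProduct_comm, hUy])
  exact ⟨U, Y, hU, hY, fun θ φ => by rw [dotProduct_comm, hYU]⟩

theorem dotProduct_eq_zero_of_support_eq {u u' y : Q → ℝ} (hu : 0 ≤ u) (hy : 0 ≤ y)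
    (hs : Function.support u' = Function.support u) (h : u ⬝ᵥ y = 0) : u' ⬝ᵥ y = 0 := by
  have hterm := (Finset.sum_eq_zero_iff_of_nonneg fun q _ => mul_nonneg (hu q) (hy q)).1 h
  refine Finset.sum_eq_zero fun q hq => ?_
  rcases mul_eq_zero.1 (hterm q hq) with h0 | h0
  · have h0' : u' q = 0 := Function.notMem_support.1 (hs ▸ Function.notMem_support.2 h0)
    rw [h0', zero_mul]
  · rw [h0, mul_zero]

theorem not_forall_dotProduct_eq_angle_add {g : Angle → ℝ} (hg : Continuous g)
    {z : Angle} (hz : ∀ θ, g θ = 0 ↔ θ = z) {u y : ℕ → Q → ℝ} (hu : ∀ r, 0 ≤ u r)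
    (hy : ∀ s, 0 ≤ y s) : ¬ ∀ r s : ℕ, u r ⬝ᵥ y s = g ((r + s : ℝ) : Angle) := by
  intro h
  obtain ⟨U, Y, hU, hY, hUY⟩ := exists_nonneg_dotProduct_eq_angle_add hg hu hy h
  obtain ⟨θ, θ', hne, hs⟩ :=
    Finite.exists_ne_map_eq_of_infinite fun θ => Function.support (U θ)
  have h' : U θ' ⬝ᵥ Y (z - θ') = 0 := by rw [hUY, hz, add_sub_cancel]
  have h : U θ ⬝ᵥ Y (z - θ') = 0 := dotProduct_eq_zero_of_support_eq (hU θ') (hY _) hs h'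
  rw [hUY, hz, add_sub_left_comm, add_eq_left, sub_eq_zero] at h
  exact hne h

end NonnegFactorization

theorem Matrix.not_forall_dotProduct_pow_mulVec_eq {Q : Type*} [Fintype Q] [DecidableEq Q]
    {ι τ : Q → ℝ} {M : Matrix Q Q ℝ} (hι : 0 ≤ ι) (hτ : 0 ≤ τ) (hM : ∀ i j, 0 ≤ M i j)
    {c ρ : ℝ} (hc : 0 < c) (hρ : 0 < ρ) :
    ¬ ∀ m : ℕ, ι ⬝ᵥ (M ^ m) *ᵥ τ = c * ρ ^ m * (1 + Real.cos m) := by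
  intro h
  have hpow := Matrix.pow_apply_nonneg hM
  refine not_forall_dotProduct_eq_angle_add (g := fun θ => 1 + θ.cos) (z := π)
    (continuous_const.add Angle.continuous_cos) (fun θ => Angle.one_add_cos_eq_zero_iff)
    (u := fun r => (c * ρ ^ r)⁻¹ • ι ᵥ* M ^ r) (y := fun s => (ρ ^ s)⁻¹ • (M ^ s) *ᵥ τ)
    (fun r j => ?_) (fun s i => ?_) fun r s => ?_
  · exact mul_nonneg (by positivity) (dotProduct_nonneg_of_nonneg hι fun i => hpow r i j)
  · exact mul_nonneg (by positivity) (dotProduct_nonneg_of_nonneg (hpow s i ·) hτ)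
  · have hrs :
        ι ᵥ* M ^ r ⬝ᵥ (M ^ s) *ᵥ τ = c * ρ ^ (r + s) * (1 + Real.cos (r + s)) := by
      rw [← dotProduct_mulVec, mulVec_mulVec, ← pow_add, h]
      push_cast
      rfl
    simp only [smul_dotProduct, dotProduct_smul, hrs, Angle.cos_coe, smul_eq_mul, pow_add]
    field_simp

theorem wordMat_replicate {A Q : Type*} [Fintype Q] [DecidableEq Q] (T : A → Matrix Q Q ℝ)
    (m : ℕ) (a : A) : wordMat T (List.replicate m a) = T a ^ m := by
  rw [wordMat, List.map_replicate, List.prod_replicate]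

theorem maSeries_unit {Q : Type*} [Fintype Q] [DecidableEq Q] (ι τ : Q → ℝ)
    (T : Unit → Matrix Q Q ℝ) (w : List Unit) :
    maSeries ι τ T w = ι ⬝ᵥ (T () ^ w.length) *ᵥ τ := by
  rw [maSeries, ← wordMat_replicate, ← List.eq_replicate_iff.2 ⟨rfl, fun _ _ => rfl⟩]

noncomputable def dampedCos (m : ℕ) : ℝ := 2⁻¹ ^ m * (1 + Real.cos m)

theorem dampedCos_nonneg (m : ℕ) : 0 ≤ dampedCos m :=
  mul_nonneg (by positivity) (by linarith [Real.neg_one_le_cos (m : ℝ)])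

theorem summable_dampedCos : Summable dampedCos := by
  refine .of_nonneg_of_le dampedCos_nonneg (fun m => ?_) (summable_geometric_two.mul_left 2)
  have := Real.cos_le_one m
  rw [dampedCos, one_div, mul_comm 2]
  gcongr
  linarith

theorem tsum_dampedCos_pos : 0 < ∑' m, dampedCos m := by
  refine lt_of_lt_of_le ?_ (summable_dampedCos.le_tsum 0 fun m _ => dampedCos_nonneg m)
  norm_num [dampedCos]

noncomputable def cosLanguage (w : List Unit) : ℝ :=
  (∑' m, dampedCos m)⁻¹ * dampedCos w.length

theorem isStochastic_cosLanguage : IsStochastic cosLanguage := by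
  refine ⟨fun w => mul_nonneg (inv_nonneg.2 tsum_dampedCos_pos.le) (dampedCos_nonneg _), ?_⟩
  let e : List Unit ≃ ℕ := .ofBijective List.length
    ⟨List.length_injective, fun m => ⟨List.replicate m (), List.length_replicate⟩⟩
  have h := summable_dampedCos.hasSum.mul_left (∑' m, dampedCos m)⁻¹
  rw [inv_mul_cancel₀ tsum_dampedCos_pos.ne'] at h
  exact e.hasSum_iff.2 h

noncomputable def dampedRotation : Matrix (Fin 3) (Fin 3) ℝ :=
  (2⁻¹ : ℝ) • !![(1 : ℝ), 0, 0; 0, Real.cos 1, -Real.sin 1; 0, Real.sin 1, Real.cos 1]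

theorem dampedRotation_pow_mulVec (m : ℕ) :
    (dampedRotation ^ m) *ᵥ ![1, 1, 0] =
      (2⁻¹ : ℝ) ^ m • ![1, Real.cos m, Real.sin m] := by
  induction m with
  | zero => simp
  | succ m ih =>
    rw [pow_succ', ← Matrix.mulVec_mulVec, ih]
    ext i
    fin_cases i <;>
      simp only [dampedRotation, Matrix.mulVec, dotProduct, Fin.sum_univ_three, Fin.zero_eta,
        Fin.mk_one, Fin.reduceFinMk, Matrix.smul_apply, Matrix.of_apply, Matrix.cons_val',
        Matrix.cons_val_fin_one, Matrix.cons_val_zero, Matrix.cons_val_one, Matrix.cons_val,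
        Pi.smul_apply, smul_eq_mul, pow_succ, Nat.cast_succ, Real.cos_add, Real.sin_add] <;>
      ring

theorem maSeries_dampedRotation :
    maSeries ![(∑' m, dampedCos m)⁻¹, (∑' m, dampedCos m)⁻¹, 0] ![1, 1, 0]
      (fun _ => dampedRotation) = cosLanguage := by
  funext w
  rw [maSeries_unit, dampedRotation_pow_mulVec, cosLanguage, dampedCos]
  simp only [dotProduct, Fin.sum_univ_three, Matrix.cons_val_zero, Matrix.cons_val_one,
    Matrix.cons_val, Pi.smul_apply, smul_eq_mul]
  ring

theorem statement11 :
    ∃ p : List Unit → ℝ, IsStochastic p ∧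
      (∃ (n : ℕ) (ι τ : Fin n → ℝ) (T : Unit → Matrix (Fin n) (Fin n) ℝ),
        maSeries ι τ T = p) ∧
      ¬ ∃ (n : ℕ) (ι τ : Fin n → ℝ) (T : Unit → Matrix (Fin n) (Fin n) ℝ),
          IsPA ι τ T ∧ maSeries ι τ T = p := by
  refine ⟨cosLanguage, isStochastic_cosLanguage, ⟨3, _, _, _, maSeries_dampedRotation⟩, ?_⟩
  rintro ⟨n, ι, τ, T, ⟨hι, hτ, hT, -, -⟩, hp⟩
  refine Matrix.not_forall_dotProduct_pow_mulVec_eq hι hτ (hT ()) (inv_pos.2 tsum_dampedCos_pos)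
    (by norm_num : (0 : ℝ) < 2⁻¹) fun m => ?_
  have h := congrFun hp (List.replicate m ())
  rw [maSeries_unit, List.length_replicate] at h
  rw [h, cosLanguage, List.length_replicate, dampedCos, mul_assoc]
end

section
/- For every integer N ≥ 1 there exists a stochastic language p over the one-letter alphabet Σ = {a} such that p is computed by a multiplicity automaton with 3 states, and every probabilistic automaton computing p has at least N states. -/
open scoped BigOperators Matrix

/-!
Take a prime `L ≥ N` and `p(aᵏ) ∝ 2⁻ᵏ (1 - cos (2πk/L))`. It is computed by three states: one
scaled by `1/2`, and a plane on which the letter acts as half a rotation by `2π/L`. Its support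
is exactly the set of `k` not divisible by `L`.

For a nonnegative automaton with `n` states, a positive path of length `k ≥ n` repeats a state
within its first `n` steps, and the cycle in between, of length `c ≤ n`, can be traversed any
number of times: the support contains `k + t c` for every `t`. If `n < L`, then `c` is prime to
`L`, so some `k + t c` is a multiple of `L`, which is not in the support.
-/

open Real Matrix

theorem Fintype.exists_lt_le_card_map_eq {α : Type*} [Fintype α] (f : ℕ → α) :
    ∃ i j, i < j ∧ j ≤ Fintype.card α ∧ f i = f j := by
  obtain ⟨a, b, hab, h⟩ :=
    Fintype.exists_ne_map_eq_of_card_lt (fun m : Fin (Fintype.card α + 1) => f m) (by simp)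
  rcases lt_or_gt_of_ne hab with hlt | hlt
  · exact ⟨a, b, hlt, by omega, h⟩
  · exact ⟨b, a, hlt, by omega, h.symm⟩

namespace Matrix

variable {R Q : Type*} [Semiring R] [LinearOrder R] [IsStrictOrderedRing R] [Fintype Q]
  {A B : Matrix Q Q R}

lemma dotProduct_pos_iff_of_nonneg {u v : Q → R} (hu : 0 ≤ u) (hv : 0 ≤ v) :
    0 < u ⬝ᵥ v ↔ ∃ i, 0 < u i ∧ 0 < v i := by
  rw [dotProduct, Finset.sum_pos_iff_of_nonneg fun i _ => mul_nonneg (hu i) (hv i)]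
  simp only [Finset.mem_univ, true_and]
  refine exists_congr fun i => ⟨fun h => ⟨(hu i).lt_of_ne ?_, (hv i).lt_of_ne ?_⟩,
    fun h => mul_pos h.1 h.2⟩ <;> rintro h0 <;> simp [← h0] at h

lemma mul_apply_pos_iff_of_nonneg (hA : ∀ i j, 0 ≤ A i j) (hB : ∀ i j, 0 ≤ B i j) (q s : Q) :
    0 < (A * B) q s ↔ ∃ r, 0 < A q r ∧ 0 < B r s := by
  rw [mul_apply']
  exact dotProduct_pos_iff_of_nonneg (fun r => hA q r) (fun r => hB r s)

lemma dotProduct_mulVec_pos_iff_of_nonneg {u v : Q → R} (hu : 0 ≤ u) (hA : ∀ i j, 0 ≤ A i j)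
    (hv : 0 ≤ v) : 0 < u ⬝ᵥ (A *ᵥ v) ↔ ∃ q s, 0 < u q ∧ 0 < A q s ∧ 0 < v s := by
  have hAv : 0 ≤ A *ᵥ v := fun q => dotProduct_nonneg_of_nonneg (hA q) hv
  simp only [dotProduct_pos_iff_of_nonneg hu hAv, mulVec, dotProduct_pos_iff_of_nonneg (hA _) hv,
    exists_and_left]

variable [DecidableEq Q]

lemma pow_apply_pos_iff_exists_chain (hA : ∀ i j, 0 ≤ A i j) (k : ℕ) (q s : Q) :
    0 < (A ^ k) q s ↔
      ∃ f : ℕ → Q, f 0 = q ∧ f k = s ∧ ∀ m < k, 0 < A (f m) (f (m + 1)) := by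
  induction k generalizing q with
  | zero =>
    rw [pow_zero, one_apply]
    refine ⟨fun h => ⟨fun _ => q, rfl, ?_, by simp⟩, fun ⟨f, hf0, hfk, _⟩ => by simp [← hf0, hfk]⟩
    by_contra hqs
    simp [hqs] at h
  | succ k ih =>
    rw [pow_succ', mul_apply_pos_iff_of_nonneg hA (pow_apply_nonneg hA k)]
    constructor
    · rintro ⟨r, hqr, hrs⟩
      obtain ⟨f, rfl, hfk, hf⟩ := (ih r).1 hrs
      refine ⟨fun m => m.casesOn q f, rfl, hfk, fun m hm => ?_⟩
      cases m with
      | zero => exact hqr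
      | succ m => exact hf m (by omega)
    · rintro ⟨f, rfl, hfk, hf⟩
      exact ⟨f 1, hf 0 (by omega),
        (ih (f 1)).2 ⟨fun m => f (m + 1), rfl, hfk, fun m hm => hf (m + 1) (by omega)⟩⟩

lemma pow_apply_pos_of_chain (hA : ∀ i j, 0 ≤ A i j) {f : ℕ → Q} {k : ℕ}
    (hf : ∀ m < k, 0 < A (f m) (f (m + 1))) {i j : ℕ} (hij : i ≤ j) (hjk : j ≤ k) :
    0 < (A ^ (j - i)) (f i) (f j) :=
  (pow_apply_pos_iff_exists_chain hA _ _ _).2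
    ⟨fun m => f (i + m), rfl, by simp [Nat.add_sub_cancel' hij], fun m hm => hf (i + m) (by omega)⟩

lemma pow_mul_apply_self_pos (hA : ∀ i j, 0 ≤ A i j) {r : Q} {c : ℕ} (hr : 0 < (A ^ c) r r)
    (t : ℕ) : 0 < (A ^ (c * t)) r r := by
  induction t with
  | zero => simp
  | succ t ih =>
    rw [mul_add_one, pow_add, mul_apply_pos_iff_of_nonneg (pow_apply_nonneg hA _)
      (pow_apply_nonneg hA _)]
    exact ⟨r, ih, hr⟩

theorem exists_forall_pow_add_mul_apply_pos (hA : ∀ i j, 0 ≤ A i j) {k : ℕ}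
    (hk : Fintype.card Q ≤ k) {q s : Q} (h : 0 < (A ^ k) q s) :
    ∃ c, 0 < c ∧ c ≤ Fintype.card Q ∧ ∀ t, 0 < (A ^ (k + t * c)) q s := by
  obtain ⟨f, rfl, rfl, hf⟩ := (pow_apply_pos_iff_exists_chain hA k q s).1 h
  obtain ⟨i, j, hij, hj, hfij⟩ := Fintype.exists_lt_le_card_map_eq f
  refine ⟨j - i, by omega, by omega, fun t => ?_⟩
  have hsplit : k + t * (j - i) = i + (j - i) * (t + 1) + (k - j) := by
    zify [hij.le, hj.trans hk]; ring
  have hA' := pow_apply_nonneg hA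
  rw [hsplit, pow_add, pow_add, mul_apply_pos_iff_of_nonneg (by simp [← pow_add, hA'])
    (hA' _)]
  refine ⟨f j, (mul_apply_pos_iff_of_nonneg (hA' _) (hA' _) _ _).2 ⟨f j, ?_, ?_⟩, ?_⟩
  · simpa [hfij] using pow_apply_pos_of_chain hA hf (Nat.zero_le i) (by omega)
  · exact pow_mul_apply_self_pos hA (hfij ▸ pow_apply_pos_of_chain hA hf hij.le (by omega)) _
  · exact pow_apply_pos_of_chain hA hf (by omega) le_rfl

theorem exists_forall_dotProduct_pow_add_mul_mulVec_pos {ι τ : Q → R} (hι : 0 ≤ ι)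
    (hA : ∀ i j, 0 ≤ A i j) (hτ : 0 ≤ τ) {k : ℕ} (hk : Fintype.card Q ≤ k)
    (h : 0 < ι ⬝ᵥ (A ^ k *ᵥ τ)) :
    ∃ c, 0 < c ∧ c ≤ Fintype.card Q ∧ ∀ t, 0 < ι ⬝ᵥ (A ^ (k + t * c) *ᵥ τ) := by
  have hA' := pow_apply_nonneg hA
  obtain ⟨q, s, hq, hqs, hs⟩ := (dotProduct_mulVec_pos_iff_of_nonneg hι (hA' k) hτ).1 h
  obtain ⟨c, hc, hcQ, hpump⟩ := exists_forall_pow_add_mul_apply_pos hA hk hqs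
  exact ⟨c, hc, hcQ, fun t =>
    (dotProduct_mulVec_pos_iff_of_nonneg hι (hA' _) hτ).2 ⟨q, s, hq, hpump t, hs⟩⟩

end Matrix

theorem Nat.Prime.exists_dvd_add_mul {p c : ℕ} (hp : p.Prime) (hc : ¬ p ∣ c) (k : ℕ) :
    ∃ t, p ∣ k + t * c := by
  have := Fact.mk hp
  have hc' : (c : ZMod p) ≠ 0 := by rwa [Ne, ZMod.natCast_eq_zero_iff]
  refine ⟨(-(k : ZMod p) / c).val, ?_⟩
  rw [← ZMod.natCast_eq_zero_iff]
  push_cast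
  rw [ZMod.natCast_zmod_val, div_mul_cancel₀ _ hc', add_neg_cancel]

theorem le_card_of_dotProduct_pow_mulVec_pos_iff {Q : Type*} [Fintype Q] [DecidableEq Q]
    {ι τ : Q → ℝ} {A : Matrix Q Q ℝ} (hι : 0 ≤ ι) (hA : ∀ i j, 0 ≤ A i j) (hτ : 0 ≤ τ)
    {L : ℕ} (hL : L.Prime) (hsupp : ∀ k, 0 < ι ⬝ᵥ (A ^ k *ᵥ τ) ↔ ¬ L ∣ k) :
    L ≤ Fintype.card Q := by
  by_contra! hQL
  have hk : ¬ L ∣ L * Fintype.card Q + 1 := fun h =>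
    hL.one_lt.ne' (Nat.dvd_one.1 ((Nat.dvd_add_right (dvd_mul_right _ _)).1 h))
  have hQk : Fintype.card Q ≤ L * Fintype.card Q + 1 :=
    (Nat.le_mul_of_pos_left _ hL.pos).trans (Nat.le_succ _)
  obtain ⟨c, hc, hcQ, hpump⟩ :=
    exists_forall_dotProduct_pow_add_mul_mulVec_pos hι hA hτ hQk ((hsupp _).2 hk)
  obtain ⟨t, ht⟩ := hL.exists_dvd_add_mul (Nat.not_dvd_of_pos_of_lt hc (by omega)) _
  exact (hsupp _).1 (hpump t) ht

def listEquivNatOfUnique (α : Type*) [Unique α] : List α ≃ ℕ where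
  toFun := List.length
  invFun n := List.replicate n default
  left_inv _ := (List.eq_replicate_iff.2 ⟨rfl, fun _ _ => Subsingleton.elim _ _⟩).symm
  right_inv _ := List.length_replicate

lemma wordMat_unit {Q : Type*} [Fintype Q] [DecidableEq Q] (T : Unit → Matrix Q Q ℝ)
    (w : List Unit) : wordMat T w = T () ^ w.length := by
  rw [wordMat, show T = fun _ => T () from rfl, List.map_const', List.prod_replicate]

noncomputable def halfPowOneSubCos (θ : ℝ) (k : ℕ) : ℝ :=
  (1 / 2) ^ k * (1 - cos (k * θ))

lemma cos_nat_mul_two_pi_div_eq_one_iff {L : ℕ} (hL : L ≠ 0) (k : ℕ) :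
    cos (k * (2 * π / L)) = 1 ↔ L ∣ k := by
  have hL' : (L : ℝ) ≠ 0 := Nat.cast_ne_zero.2 hL
  rw [cos_eq_one_iff]
  constructor
  · rintro ⟨m, hm⟩
    have : (m * L : ℤ) = k := by
      have : (m : ℝ) * L = k := by field_simp at hm; linarith [pi_pos]
      exact_mod_cast this
    exact Int.natCast_dvd_natCast.1 ⟨m, by rw [← this, mul_comm]⟩
  · rintro ⟨m, rfl⟩
    exact ⟨m, by push_cast; field_simp⟩

lemma halfPowOneSubCos_nonneg (θ : ℝ) (k : ℕ) : 0 ≤ halfPowOneSubCos θ k :=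
  mul_nonneg (by positivity) (sub_nonneg.2 (cos_le_one _))

lemma halfPowOneSubCos_pos_iff {L : ℕ} (hL : L ≠ 0) (k : ℕ) :
    0 < halfPowOneSubCos (2 * π / L) k ↔ ¬ L ∣ k := by
  rw [halfPowOneSubCos, mul_pos_iff_of_pos_left (by positivity), sub_pos,
    ← cos_nat_mul_two_pi_div_eq_one_iff hL, (cos_le_one _).lt_iff_ne]

lemma summable_halfPowOneSubCos (θ : ℝ) : Summable (halfPowOneSubCos θ) :=
  .of_nonneg_of_le (halfPowOneSubCos_nonneg θ)
    (fun k => mul_le_mul_of_nonneg_left (by linarith [neg_one_le_cos (k * θ)]) (by positivity))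
    (summable_geometric_two.mul_right 2)

noncomputable def scaledRotation (θ : ℝ) : Matrix (Fin 3) (Fin 3) ℝ :=
  (1 / 2 : ℝ) • !![1, 0, 0; 0, cos θ, -sin θ; 0, sin θ, cos θ]

lemma scaledRotation_pow_mulVec (θ : ℝ) (k : ℕ) :
    scaledRotation θ ^ k *ᵥ ![1, 1, 0] = (1 / 2 : ℝ) ^ k • ![1, cos (k * θ), sin (k * θ)] := by
  induction k with
  | zero => ext i; fin_cases i <;> simp
  | succ k ih =>
    rw [pow_succ', ← mulVec_mulVec, ih]
    ext i
    fin_cases i <;> simp [scaledRotation, mulVec, dotProduct, Fin.sum_univ_three, add_mul,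
      cos_add, sin_add] <;> ring

lemma maSeries_scaledRotation (θ : ℝ) (w : List Unit) :
    maSeries ![1, -1, 0] ![1, 1, 0] (fun _ => scaledRotation θ) w =
      halfPowOneSubCos θ w.length := by
  rw [maSeries, wordMat_unit, scaledRotation_pow_mulVec]
  simp [halfPowOneSubCos, dotProduct, Fin.sum_univ_three]
  ring

theorem statement12_general (N : ℕ) :
    ∃ p : List Unit → ℝ, IsStochastic p ∧
      (∃ (ι τ : Fin 3 → ℝ) (T : Unit → Matrix (Fin 3) (Fin 3) ℝ),
        maSeries ι τ T = p) ∧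
      ∀ (n : ℕ) (ι τ : Fin n → ℝ) (T : Unit → Matrix (Fin n) (Fin n) ℝ),
        IsPA ι τ T → maSeries ι τ T = p → N ≤ n := by
  obtain ⟨L, hNL, hL⟩ := Nat.exists_infinite_primes N
  set θ := 2 * π / L
  have hsum := summable_halfPowOneSubCos θ
  set Z := ∑' k, halfPowOneSubCos θ k
  have hZ : 0 < Z := hsum.tsum_pos (halfPowOneSubCos_nonneg θ) 1
    ((halfPowOneSubCos_pos_iff hL.ne_zero 1).2 hL.not_dvd_one)
  refine ⟨fun w => Z⁻¹ * halfPowOneSubCos θ w.length,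
    ⟨fun w => mul_nonneg (inv_nonneg.2 hZ.le) (halfPowOneSubCos_nonneg θ _), ?_⟩,
    ⟨Z⁻¹ • ![1, -1, 0], ![1, 1, 0], fun _ => scaledRotation θ, ?_⟩, ?_⟩
  · refine ((listEquivNatOfUnique Unit).hasSum_iff
      (f := fun k => Z⁻¹ * halfPowOneSubCos θ k)).2 ?_
    rw [← inv_mul_cancel₀ hZ.ne']
    exact hsum.hasSum.mul_left Z⁻¹
  · ext w
    rw [maSeries, smul_dotProduct, ← maSeries, maSeries_scaledRotation, smul_eq_mul]
  · rintro n ι τ T ⟨hι, hτ, hT, -⟩ hp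
    refine hNL.trans (Fintype.card_fin n ▸ le_card_of_dotProduct_pow_mulVec_pos_iff hι (hT ()) hτ
      hL fun k => ?_)
    have hk := congrFun hp (List.replicate k ())
    rw [maSeries, wordMat_unit, List.length_replicate] at hk
    rw [hk, mul_pos_iff_of_pos_left (inv_pos.2 hZ), halfPowOneSubCos_pos_iff hL.ne_zero]

theorem statement12 (N : ℕ) (hN : 1 ≤ N) :
    ∃ p : List Unit → ℝ, IsStochastic p ∧
      (∃ (ι τ : Fin 3 → ℝ) (T : Unit → Matrix (Fin 3) (Fin 3) ℝ),
        maSeries ι τ T = p) ∧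
      ∀ (n : ℕ) (ι τ : Fin n → ℝ) (T : Unit → Matrix (Fin n) (Fin n) ℝ),
        IsPA ι τ T → maSeries ι τ T = p → N ≤ n :=
  statement12_general N
end

section
/- Let Σ be a finite nonempty alphabet, P a stochastic language over Σ, and let u_0, u_1, …, u_n ∈ Σ* be words with P(u_iΣ*) > 0 for each i such that the family {u_0^{-1}P, u_1^{-1}P, …, u_n^{-1}P} is linearly independent in the real vector space of functions Σ* → ℝ. Then for μ-almost every ω ∈ Ω there exist ε > 0 and M ∈ ℕ such that for every m ≥ M: P_{ω,m}(u_iΣ*) > 0 for each i ∈ {0,…,n}, and the system I({u_1,…,u_n}, u_0, ω, m, ε) has no solution. -/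
open scoped BigOperators
open MeasureTheory

/-- `pre w` is the set `wΣ*` of words having `w` as a prefix. -/
def pre {A : Type*} (w : List A) : Set (List A) := {v | w <+: v}

/-- The residualLang language `u⁻¹P` of `P` with respect to the word `u`. -/
noncomputable def residualLang {A : Type*} (P : List A → ℝ) (u w : List A) : ℝ :=
  P (u ++ w) / ∑' v : pre u, P (v : List A)

/-- The empirical probability of the set `X` among the first `m` samples of `ω`. -/
noncomputable def emp {A : Type*} (ω : ℕ → List A) (m : ℕ) (X : Set (List A)) : ℝ :=
  (∑ i ∈ Finset.range m, X.indicator (fun _ => (1 : ℝ)) (ω i)) / m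

/-- `x` is a solution of the system `I({u 0, …, u (n-1)}, v, ω, m, ε)`. -/
def IsSolution {A : Type*} {n : ℕ} (u : Fin n → List A) (v : List A)
    (ω : ℕ → List A) (m : ℕ) (ε : ℝ) (x : Fin n → ℝ) : Prop :=
  (∑ i, x i = 1) ∧
    ∀ w : List A, (∃ i < m, w <:+: ω i) →
      |emp ω m (pre (v ++ w)) / emp ω m (pre v) -
          ∑ i, x i * (emp ω m (pre (u i ++ w)) / emp ω m (pre (u i)))| ≤ ε

/-- Words over a countable alphabet carry the discrete (full) σ-algebra. -/
instance listMeasurableSpace {A : Type*} : MeasurableSpace (List A) := ⊤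

/-- `μ` is the infinite i.i.d. product of the law on `List A` given by `P`:
its finite-dimensional cylinder probabilities are the corresponding products. -/
def IsIIDProduct {A : Type*} (P : List A → ℝ) (μ : Measure (ℕ → List A)) : Prop :=
  ∀ (s : Finset ℕ) (E : ℕ → Set (List A)),
    μ {ω | ∀ i ∈ s, ω i ∈ E i} = ∏ i ∈ s, ∑' w : E i, ENNReal.ofReal (P (w : List A))

/-!
Write `p_i(w) = P(u_i w Σ*) / P(u_i Σ*)`. Since `u_i⁻¹P(w) = p_i(w) - ∑ₐ p_i(wa)`, the residuals
are the image of the `p_i` under a linear map, so the `p_i` are linearly independent too. In the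
finite-dimensional coefficient space this independence is already witnessed by finitely many
words `W`, quantitatively: `‖c‖ ≤ C · max_{w ∈ W} |∑ c_i p_i(w)|`. By the strong law of large
numbers, almost surely the empirical ratios converge to the `p_i(w)` and every `w ∈ W` (each has
`p_i(w) > 0` for some `i`) eventually occurs as a factor of a sample. A solution `x` of the system
with `ε = 1/(4C)` would then give, for `c = (1, -x)`, the bound `‖c‖ ≤ 1/4 + ‖c‖/2`, which
contradicts `‖c‖ ≥ 1`.
-/

open ProbabilityTheory Filter Topology

section Development

variable {A : Type*}

noncomputable def mass (P : List A → ℝ) (X : Set (List A)) : ℝ := ∑' w : X, P w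

noncomputable def prefixResidual (P : List A → ℝ) (u w : List A) : ℝ :=
  mass P (pre (u ++ w)) / mass P (pre u)

namespace IsStochastic

variable {P : List A → ℝ}

theorem mass_nonneg (hP : IsStochastic P) (X : Set (List A)) : 0 ≤ mass P X :=
  tsum_nonneg fun w => hP.1 w

theorem mass_eq_toReal (hP : IsStochastic P) (X : Set (List A)) :
    mass P X = (∑' w : X, ENNReal.ofReal (P w)).toReal := by
  rw [← ENNReal.ofReal_tsum_of_nonneg (f := fun w : X => P w) (fun w => hP.1 w)
      (hP.2.summable.subtype X), ← mass, ENNReal.toReal_ofReal (hP.mass_nonneg X)]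

end IsStochastic

theorem pre_eq_insert_biUnion [Fintype A] (v : List A) :
    pre v = {v} ∪ ⋃ a ∈ Finset.univ, pre (v ++ [a]) := by
  ext w
  simp only [pre, Set.mem_ofPred_eq, Set.mem_union, Set.mem_singleton_iff, Set.mem_iUnion,
    Finset.mem_univ, exists_true_left]
  constructor
  · rintro ⟨_ | ⟨a, t⟩, rfl⟩
    · simp
    · exact Or.inr ⟨a, t, by simp⟩
  · rintro (rfl | ⟨a, t, rfl⟩)
    · exact List.prefix_refl w
    · exact ⟨a :: t, by simp⟩

theorem disjoint_singleton_biUnion_pre [Fintype A] (v : List A) :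
    Disjoint {v} (⋃ a ∈ Finset.univ, pre (v ++ [a])) := by
  simp only [Set.disjoint_singleton_left, Set.mem_iUnion, pre, Set.mem_ofPred_eq, not_exists]
  intro a _ h
  simpa using h.length_le

theorem pairwise_disjoint_pre_append_singleton (v : List A) :
    Pairwise (Function.onFun Disjoint fun a : A => pre (v ++ [a])) := by
  intro a b hab
  rw [Function.onFun, Set.disjoint_left]
  rintro w ⟨s, rfl⟩ ⟨t, ht⟩
  simp only [List.append_assoc, List.append_cancel_left_eq, List.singleton_append,
    List.cons.injEq] at ht
  exact hab ht.1.symm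

theorem IsStochastic.mass_pre [Fintype A] {P : List A → ℝ} (hP : IsStochastic P) (v : List A) :
    mass P (pre v) = P v + ∑ a : A, mass P (pre (v ++ [a])) := by
  have hsum (X : Set (List A)) : Summable fun w : X => P w := hP.2.summable.subtype X
  rw [mass, pre_eq_insert_biUnion, (hsum _).tsum_union_disjoint
      (disjoint_singleton_biUnion_pre v) (hsum _),
    Summable.tsum_finset_bUnion_disjoint
      (fun a _ b _ hab => pairwise_disjoint_pre_append_singleton v hab) fun a _ => hsum _,
    tsum_singleton]
  rfl

noncomputable def prefixDiff [Fintype A] : (List A → ℝ) →ₗ[ℝ] (List A → ℝ) where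
  toFun f w := f w - ∑ a, f (w ++ [a])
  map_add' f g := by
    ext w
    simp only [Pi.add_apply, Finset.sum_add_distrib]
    ring
  map_smul' c f := by
    ext w
    simp only [Pi.smul_apply, smul_eq_mul, RingHom.id_apply, Finset.mul_sum, mul_sub]

theorem prefixDiff_prefixResidual [Fintype A] {P : List A → ℝ} (hP : IsStochastic P)
    (u : List A) : prefixDiff (prefixResidual P u) = residualLang P u := by
  ext w
  have h := hP.mass_pre (u ++ w)
  simp only [List.append_assoc] at h
  change prefixResidual P u w - ∑ a, prefixResidual P u (w ++ [a]) = _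
  rw [residualLang, ← mass, prefixResidual, eq_sub_of_add_eq h.symm]
  simp only [prefixResidual, ← Finset.sum_div, sub_div]

theorem linearIndependent_prefixResidual [Fintype A] {P : List A → ℝ} (hP : IsStochastic P)
    {ι : Type*} (u : ι → List A) (hind : LinearIndependent ℝ fun i => residualLang P (u i)) :
    LinearIndependent ℝ fun i => prefixResidual P (u i) :=
  LinearIndependent.of_comp prefixDiff <| by
    simpa only [Function.comp_def, prefixDiff_prefixResidual hP] using hind

section FiniteWitness

variable {ι α : Type*} [Fintype ι] {g : ι → α → ℝ}

theorem LinearIndependent.exists_finset_forall_eq_zero (hg : LinearIndependent ℝ g) :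
    ∃ W : Finset α, (∀ w ∈ W, ∃ i, g i w ≠ 0) ∧
      ∀ c : ι → ℝ, (∀ w ∈ W, ∑ i, c i * g i w = 0) → c = 0 := by
  classical
  let K : Finset α → Submodule ℝ (ι → ℝ) := fun W =>
    ⨅ w ∈ W, LinearMap.ker (∑ i, g i w • LinearMap.proj i)
  have mem_K {W c} : c ∈ K W ↔ ∀ w ∈ W, ∑ i, c i * g i w = 0 := by
    simp [K, mul_comm]
  obtain ⟨_, ⟨W, hW, rfl⟩, hmin⟩ := IsArtinian.set_has_minimal
    (K '' {W | ∀ w ∈ W, ∃ i, g i w ≠ 0}) ⟨_, ∅, by simp, rfl⟩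
  refine ⟨W, hW, fun c hc => ?_⟩
  by_contra hc0
  -- a combination vanishing on `W` but not everywhere yields a word whose insertion shrinks `K W`
  obtain ⟨w, hw⟩ : ∃ w, ∑ i, c i * g i w ≠ 0 := by
    by_contra! h
    exact hc0 (funext <| Fintype.linearIndependent_iff.1 hg c (funext fun w => by simp [h]))
  refine hmin (K (insert w W)) ⟨insert w W, ?_, rfl⟩ (lt_of_le_of_ne ?_ ?_)
  · refine (Finset.forall_mem_insert _ _ _).2 ⟨?_, hW⟩
    by_contra! h
    simp [h] at hw
  · intro c' hc'
    rw [mem_K] at hc' ⊢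
    exact fun v hv => hc' v (Finset.mem_insert_of_mem hv)
  · intro heq
    have := mem_K.1 (heq ▸ mem_K.2 hc)
    exact hw (this w (Finset.mem_insert_self w W))

theorem LinearIndependent.exists_finset_norm_le_mul (hg : LinearIndependent ℝ g) :
    ∃ (W : Finset α) (C : ℝ), 0 < C ∧ (∀ w ∈ W, ∃ i, g i w ≠ 0) ∧
      ∀ (c : ι → ℝ) (b : ℝ), 0 ≤ b → (∀ w ∈ W, |∑ i, c i * g i w| ≤ b) → ‖c‖ ≤ C * b := by
  obtain ⟨W, hWsupp, hW⟩ := hg.exists_finset_forall_eq_zero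
  let T : (ι → ℝ) →ₗ[ℝ] (W → ℝ) :=
    LinearMap.pi fun w => ∑ i, g i w • LinearMap.proj i
  have T_apply (c w) : T c w = ∑ i, c i * g i w := by simp [T, mul_comm]
  obtain ⟨C, hC, hT⟩ := T.exists_antilipschitzWith <| LinearMap.ker_eq_bot'.2 fun c hc =>
    hW c fun w hw => by simpa [T_apply] using congrFun hc ⟨w, hw⟩
  refine ⟨W, C, hC, hWsupp, fun c b hb hcb => (hT.le_mul_norm (map_zero T) c).trans ?_⟩
  gcongr
  exact (pi_norm_le_iff_of_nonneg hb).2 fun w => by simpa [T_apply] using hcb w w.2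

end FiniteWitness

section Perturbation

variable {ι α : Type*} [Fintype ι] {g R : ι → α → ℝ} {W : Finset α} {C η : ℝ}

theorem norm_le_of_forall_abs_sum_mul_le
    (hbound : ∀ (c : ι → ℝ) (b : ℝ), 0 ≤ b → (∀ w ∈ W, |∑ i, c i * g i w| ≤ b) → ‖c‖ ≤ C * b)
    (hR : ∀ i, ∀ w ∈ W, |R i w - g i w| ≤ η) (hη : 0 ≤ η) {b : ℝ} (hb : 0 ≤ b) {c : ι → ℝ}
    (hc : ∀ w ∈ W, |∑ i, c i * R i w| ≤ b) :
    ‖c‖ ≤ C * (b + Fintype.card ι * η * ‖c‖) := by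
  refine hbound c _ (by positivity) fun w hw => ?_
  have hsplit : ∑ i, c i * g i w = ∑ i, c i * R i w - ∑ i, c i * (R i w - g i w) := by
    simp only [mul_sub, Finset.sum_sub_distrib, sub_sub_cancel]
  calc |∑ i, c i * g i w|
      ≤ |∑ i, c i * R i w| + ∑ i, |c i| * |R i w - g i w| := by
        rw [hsplit]
        refine (abs_sub _ _).trans ?_
        gcongr
        simpa only [abs_mul] using Finset.abs_sum_le_sum_abs (fun i => c i * (R i w - g i w)) _
    _ ≤ b + ∑ _i : ι, ‖c‖ * η := by
        gcongr with i
        · exact hc w hw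
        · exact norm_le_pi_norm c i
        · exact hR i w hw
    _ = b + Fintype.card ι * η * ‖c‖ := by
        rw [Finset.sum_const, Finset.card_univ, nsmul_eq_mul]
        ring

theorem exists_lt_abs_sub_sum_mul {n : ℕ} {g R : Fin (n + 1) → α → ℝ} (hC : 0 < C)
    (hbound : ∀ (c : Fin (n + 1) → ℝ) (b : ℝ), 0 ≤ b →
      (∀ w ∈ W, |∑ i, c i * g i w| ≤ b) → ‖c‖ ≤ C * b)
    (hR : ∀ i, ∀ w ∈ W, |R i w - g i w| ≤ 1 / (2 * C * (n + 1))) (x : Fin n → ℝ) :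
    ∃ w ∈ W, 1 / (4 * C) < |R 0 w - ∑ i, x i * R i.succ w| := by
  by_contra! hx
  set c : Fin (n + 1) → ℝ := Fin.cons 1 (-x)
  have hc : 1 ≤ ‖c‖ := by simpa [c] using norm_le_pi_norm c 0
  have key := norm_le_of_forall_abs_sum_mul_le hbound hR (by positivity) (b := 1 / (4 * C))
    (by positivity) (c := c) fun w hw => by
      simpa [c, Fin.sum_univ_succ, sub_eq_add_neg] using hx w hw
  have hC' : C * (1 / (4 * C) + (n + 1) * (1 / (2 * C * (n + 1))) * ‖c‖) =
      1 / 4 + ‖c‖ / 2 := by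
    field_simp
  rw [Fintype.card_fin, Nat.cast_succ, hC'] at key
  linarith

end Perturbation

namespace IsIIDProduct

variable {P : List A → ℝ} {μ : Measure (ℕ → List A)}

theorem measure_eval_preimage (hμ : IsIIDProduct P μ) (i : ℕ) (E : Set (List A)) :
    μ ((fun ω => ω i) ⁻¹' E) = ∑' w : E, ENNReal.ofReal (P w) := by
  have h := hμ {i} fun _ => E
  simp only [Finset.mem_singleton, forall_eq, Finset.prod_singleton] at h
  exact h

theorem isProbabilityMeasure (hμ : IsIIDProduct P μ) : IsProbabilityMeasure μ :=
  ⟨by simpa using hμ ∅ fun _ => Set.univ⟩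

theorem identDistrib_eval (hμ : IsIIDProduct P μ) (i j : ℕ) :
    IdentDistrib (fun ω => ω i) (fun ω => ω j) μ μ where
  aemeasurable_fst := (measurable_pi_apply i).aemeasurable
  aemeasurable_snd := (measurable_pi_apply j).aemeasurable
  map_eq := Measure.ext fun E hE => by
    rw [Measure.map_apply (measurable_pi_apply i) hE, Measure.map_apply (measurable_pi_apply j) hE,
      hμ.measure_eval_preimage, hμ.measure_eval_preimage]

theorem indepFun_eval (hμ : IsIIDProduct P μ) {i j : ℕ} (hij : i ≠ j) :
    IndepFun (fun ω => ω i) (fun ω => ω j) μ := by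
  rw [indepFun_iff_measure_inter_preimage_eq_mul]
  intro s t _ _
  have hset : {ω : ℕ → List A | ∀ k ∈ ({i, j} : Finset ℕ), ω k ∈ if k = i then s else t} =
      (fun ω => ω i) ⁻¹' s ∩ (fun ω => ω j) ⁻¹' t := by
    ext ω
    simp [hij.symm]
  rw [← hset, hμ, Finset.prod_pair hij, if_pos rfl, if_neg hij.symm,
    hμ.measure_eval_preimage, hμ.measure_eval_preimage]

theorem ae_tendsto_emp (hμ : IsIIDProduct P μ) (hP : IsStochastic P) (X : Set (List A)) :
    ∀ᵐ ω ∂μ, Tendsto (fun m => emp ω m X) atTop (𝓝 (mass P X)) := by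
  have := hμ.isProbabilityMeasure
  have hX : Measurable (X.indicator fun _ => (1 : ℝ)) := fun _ _ => trivial
  let Y : ℕ → (ℕ → List A) → ℝ := fun i ω => X.indicator (fun _ => 1) (ω i)
  have hY0 : Y 0 = ((fun ω => ω 0) ⁻¹' X).indicator 1 := by
    ext ω
    exact (Set.indicator_comp_right fun ω : ℕ → List A => ω 0).symm
  have hmeas : MeasurableSet ((fun ω : ℕ → List A => ω 0) ⁻¹' X) :=
    measurable_pi_apply 0 trivial
  have hint : Integrable (Y 0) μ := by
    rw [hY0]
    exact (integrable_const 1).indicator hmeas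
  have hexp : μ[Y 0] = mass P X := by
    rw [hY0, integral_indicator_one hmeas, measureReal_def, hμ.measure_eval_preimage,
      hP.mass_eq_toReal]
  have hlaw := strong_law_ae_real Y hint
    (fun i j hij => (hμ.indepFun_eval hij).comp hX hX)
    (fun i => (hμ.identDistrib_eval i 0).comp hX)
  rwa [hexp] at hlaw

theorem ae_forall_tendsto_emp_pre [Countable A] (hμ : IsIIDProduct P μ) (hP : IsStochastic P) :
    ∀ᵐ ω ∂μ, ∀ v : List A,
      Tendsto (fun m => emp ω m (pre v)) atTop (𝓝 (mass P (pre v))) :=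
  ae_all_iff.2 fun v => hμ.ae_tendsto_emp hP (pre v)

end IsIIDProduct

theorem exists_lt_of_emp_pos {ω : ℕ → List A} {m : ℕ} {X : Set (List A)}
    (h : 0 < emp ω m X) : ∃ i < m, ω i ∈ X := by
  by_contra! hX
  rw [emp, Finset.sum_eq_zero fun i hi => Set.indicator_of_notMem (hX i (by simpa using hi)) _,
    zero_div] at h
  exact h.false

theorem eventually_isInfix_of_tendsto_emp {ω : ℕ → List A} {v w : List A} {q : ℝ} (hq : 0 < q)
    (h : Tendsto (fun m => emp ω m (pre (v ++ w))) atTop (𝓝 q)) :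
    ∀ᶠ m in atTop, ∃ i < m, w <:+: ω i :=
  (h.eventually_const_lt hq).mono fun _ hm =>
    (exists_lt_of_emp_pos hm).imp fun _ ⟨hi, t, ht⟩ => ⟨hi, v, t, ht⟩

end Development

theorem statement13_general {A : Type*} [Fintype A]
    (P : List A → ℝ) (hP : IsStochastic P) {n : ℕ} (u : Fin (n + 1) → List A)
    (hres : ∀ i, 0 < ∑' v : pre (u i), P (v : List A))
    (hind : LinearIndependent ℝ fun i : Fin (n + 1) => residualLang P (u i))
    (μ : Measure (ℕ → List A)) (hμ : IsIIDProduct P μ) :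
    ∀ᵐ ω ∂μ, ∃ ε > (0 : ℝ), ∃ M : ℕ, ∀ m ≥ M,
      (∀ i, 0 < emp ω m (pre (u i))) ∧
      ¬ ∃ x : Fin n → ℝ, IsSolution (fun i : Fin n => u i.succ) (u 0) ω m ε x := by
  obtain ⟨W, C, hC, hWsupp, hbound⟩ :=
    (linearIndependent_prefixResidual hP u hind).exists_finset_norm_le_mul
  filter_upwards [hμ.ae_forall_tendsto_emp_pre hP] with ω hω
  have hη : 0 < 1 / (2 * C * (n + 1)) := by positivity
  have hpos : ∀ᶠ m in atTop, ∀ i, 0 < emp ω m (pre (u i)) :=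
    eventually_all.2 fun i => (hω _).eventually_const_lt (hres i)
  have hclose : ∀ᶠ m in atTop, ∀ i, ∀ w ∈ W,
      |emp ω m (pre (u i ++ w)) / emp ω m (pre (u i)) - prefixResidual P (u i) w|
        ≤ 1 / (2 * C * (n + 1)) :=
    eventually_all.2 fun i => (eventually_all_finset W).2 fun w _ =>
      (Metric.tendsto_nhds.1 ((hω _).div (hω _) (hres i).ne') _ hη).mono fun _ h => h.le
  have hfact : ∀ᶠ m in atTop, ∀ w ∈ W, ∃ j < m, w <:+: ω j := by
    refine (eventually_all_finset W).2 fun w hw => ?_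
    obtain ⟨i, hi⟩ := hWsupp w hw
    exact eventually_isInfix_of_tendsto_emp
      ((hP.mass_nonneg _).lt_of_ne' (div_ne_zero_iff.1 hi).1) (hω (u i ++ w))
  obtain ⟨M, hM⟩ := eventually_atTop.1 (hpos.and (hclose.and hfact))
  refine ⟨1 / (4 * C), by positivity, M, fun m hm => ⟨(hM m hm).1, ?_⟩⟩
  rintro ⟨x, -, hx⟩
  obtain ⟨w, hw, hlt⟩ := exists_lt_abs_sub_sum_mul hC hbound (hM m hm).2.1 x
  exact hlt.not_ge (hx w ((hM m hm).2.2 w hw))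

theorem statement13 {A : Type*} [Fintype A] [Nonempty A]
    (P : List A → ℝ) (hP : IsStochastic P) {n : ℕ} (u : Fin (n + 1) → List A)
    (hres : ∀ i, 0 < ∑' v : pre (u i), P (v : List A))
    (hind : LinearIndependent ℝ fun i : Fin (n + 1) => residualLang P (u i))
    (μ : Measure (ℕ → List A)) (hμ : IsIIDProduct P μ) :
    ∀ᵐ ω ∂μ, ∃ ε > (0 : ℝ), ∃ M : ℕ, ∀ m ≥ M,
      (∀ i, 0 < emp ω m (pre (u i))) ∧
      ¬ ∃ x : Fin n → ℝ, IsSolution (fun i : Fin n => u i.succ) (u 0) ω m ε x :=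
  statement13_general P hP u hres hind μ hμ
end

section
/- Let x be a rational number with reduced fraction x = p/q (p ∈ ℤ, q ≥ 1, gcd(p,q) = 1). Let (ε_n) be a sequence of nonnegative real numbers converging to 0 and let (y_n) be a sequence of rational numbers such that |x − y_n| ≤ ε_n for all but finitely many n. Then there exists an integer N such that for every n ≥ N: |y_n − x| ≤ ε_n ≤ 1/q², and x is the unique rational number with this property, i.e., every rational number z with reduced fraction z = p'/q' (q' ≥ 1, gcd(p',q') = 1) satisfying |y_n − z| ≤ ε_n ≤ 1/q'² is equal to x. -/
open Filter

lemma key (x z : ℚ) (h : x ≠ z) : (1 : ℚ) / ((x.den : ℚ) * z.den) ≤ |x - z| := by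
  have hx := Rat.num_div_den x
  have hz := Rat.num_div_den z
  set k : ℤ := x.num * z.den - z.num * x.den with hk
  have hdx : (x.den : ℚ) ≠ 0 := by exact_mod_cast x.den_ne_zero
  have hdz : (z.den : ℚ) ≠ 0 := by exact_mod_cast z.den_ne_zero
  have heq : x - z = (k : ℚ) / ((x.den : ℚ) * z.den) := by
    rw [eq_div_iff (by positivity), hk]
    push_cast
    rw [sub_mul]
    nth_rewrite 1 [← hx]; nth_rewrite 2 [← hz]
    field_simp
  have hk0 : k ≠ 0 := by
    intro h0
    apply h
    rw [← sub_eq_zero, heq, h0]; simp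
  have h1 : (1 : ℚ) ≤ |(k : ℚ)| := by
    exact_mod_cast Int.one_le_abs hk0
  rw [heq, abs_div, abs_of_pos (by positivity : (0:ℚ) < (x.den : ℚ) * z.den)]
  gcongr

theorem statement18 (x : ℚ) (ε : ℕ → ℝ) (hε : ∀ n, 0 ≤ ε n)
    (hε0 : Tendsto ε atTop (nhds 0)) (y : ℕ → ℚ)
    (hy : ∀ᶠ n in atTop, |(x : ℝ) - (y n : ℝ)| ≤ ε n) :
    ∃ N : ℕ, ∀ n ≥ N,
      (|(y n : ℝ) - (x : ℝ)| ≤ ε n ∧ ε n ≤ 1 / (x.den : ℝ) ^ 2) ∧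
      ∀ z : ℚ, |(y n : ℝ) - (z : ℝ)| ≤ ε n → ε n ≤ 1 / (z.den : ℝ) ^ 2 → z = x := by
  have hq : (0 : ℝ) < (x.den : ℝ) := by exact_mod_cast x.pos
  have hδ : (0 : ℝ) < 1 / (4 * (x.den : ℝ) ^ 2) := by positivity
  have hsmall : ∀ᶠ n in atTop, ε n < 1 / (4 * (x.den : ℝ) ^ 2) := by
    have := hε0.eventually (eventually_lt_nhds hδ)
    simpa using this
  obtain ⟨N, hN⟩ := eventually_atTop.1 (hy.and hsmall)
  refine ⟨N, fun n hn => ?_⟩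
  obtain ⟨h1, h2⟩ := hN n hn
  have h1' : |(y n : ℝ) - (x : ℝ)| ≤ ε n := by rwa [abs_sub_comm]
  refine ⟨⟨h1', ?_⟩, ?_⟩
  · calc ε n ≤ 1 / (4 * (x.den : ℝ) ^ 2) := h2.le
      _ ≤ 1 / (x.den : ℝ) ^ 2 := by
        apply div_le_div_of_nonneg_left one_pos.le (by positivity); nlinarith
  · intro z hz1 hz2
    by_contra hzx
    have hq' : (0 : ℝ) < (z.den : ℝ) := by exact_mod_cast z.pos
    have hkey : (1 : ℝ) / ((x.den : ℝ) * z.den) ≤ |(x : ℝ) - (z : ℝ)| := by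
      have := key x z (Ne.symm hzx)
      have h' : ((1 : ℚ) / ((x.den : ℚ) * z.den) : ℝ) ≤ (|x - z| : ℚ) := by
        exact_mod_cast this
      push_cast at h'
      rwa [abs_sub_comm] at *
    have htri : |(x : ℝ) - (z : ℝ)| ≤ 2 * ε n := by
      calc |(x : ℝ) - (z : ℝ)| ≤ |(x : ℝ) - (y n : ℝ)| + |(y n : ℝ) - (z : ℝ)| := by
            have := abs_sub_le (x : ℝ) (y n : ℝ) (z : ℝ); linarith [this]
        _ ≤ 2 * ε n := by linarith
    have hA : (1 : ℝ) / ((x.den : ℝ) * z.den) ≤ 2 * ε n := le_trans hkey htri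
    -- from ε n ≤ 1/q'²: 1/(qq') ≤ 2/q'² → q' ≤ 2q
    have hB : (z.den : ℝ) ≤ 2 * x.den := by
      have : (1 : ℝ) / ((x.den : ℝ) * z.den) ≤ 2 / (z.den : ℝ) ^ 2 := by
        calc (1 : ℝ) / ((x.den : ℝ) * z.den) ≤ 2 * ε n := hA
          _ ≤ 2 * (1 / (z.den : ℝ) ^ 2) := by linarith
          _ = 2 / (z.den : ℝ) ^ 2 := by ring
      rw [div_le_div_iff₀ (by positivity) (by positivity)] at this
      nlinarith
    -- then 2 ε n < 1/(2q²) ≤ 1/(qq')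
    have hC : 2 * ε n < 1 / ((x.den : ℝ) * z.den) := by
      have : (1 : ℝ) / ((x.den : ℝ) * z.den) ≥ 1 / (2 * (x.den : ℝ) ^ 2) := by
        apply div_le_div_of_nonneg_left one_pos.le (by positivity)
        nlinarith
      have e : (1:ℝ)/(2*(x.den:ℝ)^2) = 2 * (1/(4*(x.den:ℝ)^2)) := by
        field_simp; ring
      linarith
    linarith
end
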